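/- arXiv:math/0207085 — 9 statements merged into one kernel-verified Lean document; each statement's English description precedes it below -/
import Mathlib

section
/- For every integer D ≥ 1, the coefficients of t, t², t³ and t⁴ in the formal power series P_B(t)·Q_B(t) ∈ ℚ[[t]] are all zero, where P_B(t) = (1−t)^{−D}·(1−t²)^{−D(D−1)/2} and Q_B(t) = 1 − D t + (1/3)D(D²−1) t³ − (1/12)D²(D²−1) t⁴. -/
/-! `P_B` is the inverse of the polynomial `R = (1 - t)^D (1 - t²)^(D choose 2)`, so
`P_B Q_B = 1 + P_B (Q_B - R)` and it suffices that `Q_B ≡ R mod t⁵`. Since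
`1 - t² = (1 - t)(1 + t)`, the coefficients of `R` are binomial convolutions, polynomials in `D`
that agree with those of `Q_B` up to degree four. -/

open PowerSeries

/-- The Poincaré series of the parafermionic algebra with `D` degrees of freedom,
`P_B(t) = (1-t)^{-D} (1-t²)^{-D(D-1)/2}`, as a formal power series over `ℚ`. -/
noncomputable def parafermionicPoincareSeries (D : ℕ) : PowerSeries ℚ :=
  ((1 - PowerSeries.X : PowerSeries ℚ)⁻¹) ^ D *
    ((1 - PowerSeries.X ^ 2 : PowerSeries ℚ)⁻¹) ^ (D * (D - 1) / 2)

/-- The series `Q_B(t) = 1 - D t + (1/3) D (D²-1) t³ - (1/12) D² (D²-1) t⁴` built from the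
dimensions of the homogeneous components of the dual cubic algebra `B^!`. -/
noncomputable def parafermionicDualSeries (D : ℕ) : PowerSeries ℚ :=
  1 - PowerSeries.C (D : ℚ) * PowerSeries.X
    + PowerSeries.C ((D : ℚ) * ((D : ℚ) ^ 2 - 1) / 3) * PowerSeries.X ^ 3
    - PowerSeries.C ((D : ℚ) ^ 2 * ((D : ℚ) ^ 2 - 1) / 12) * PowerSeries.X ^ 4

namespace PowerSeries

variable {R : Type*} [CommRing R]

theorem coeff_mul_eq_zero_of_mul_eq_one_of_coeff_eq {φ ψ χ : R⟦X⟧} {N : ℕ} (hφψ : φ * ψ = 1)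
    (h : ∀ m < N, coeff m χ = coeff m ψ) {n : ℕ} (hn : n ≠ 0) (hnN : n < N) :
    coeff n (φ * χ) = 0 := by
  have hdvd : X ^ N ∣ φ * (χ - ψ) :=
    (X_pow_dvd_iff.2 fun m hm ↦ by rw [map_sub, h m hm, sub_self]).mul_left _
  have hsplit : φ * χ = 1 + φ * (χ - ψ) := by rw [mul_sub, hφψ]; ring
  rw [hsplit, map_add, coeff_one, if_neg hn, X_pow_dvd_iff.1 hdvd n hnN, add_zero]

theorem coeff_one_add_X_pow (a n : ℕ) : coeff n ((1 + X : R⟦X⟧) ^ a) = a.choose n := by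
  rw [← Polynomial.coe_X, ← Polynomial.coe_one, ← Polynomial.coe_add, ← Polynomial.coe_pow,
    Polynomial.coeff_coe, Polynomial.coeff_one_add_X_pow]

theorem coeff_one_sub_X_pow (a n : ℕ) :
    coeff n ((1 - X : R⟦X⟧) ^ a) = (-1) ^ n * a.choose n := by
  have hrescale : (1 - X : R⟦X⟧) = rescale (-1) (1 + X) := by simp [sub_eq_add_neg]
  rw [hrescale, ← map_pow, coeff_rescale, coeff_one_add_X_pow]

end PowerSeries

theorem parafermionicPoincareSeries_mul_denominator_eq_one (D : ℕ) :
    parafermionicPoincareSeries D * ((1 - X) ^ D * (1 - X ^ 2) ^ D.choose 2) = 1 := by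
  have hinv (φ : ℚ⟦X⟧) (hφ : constantCoeff φ ≠ 0) (k : ℕ) : φ⁻¹ ^ k * φ ^ k = 1 := by
    rw [← mul_pow, PowerSeries.inv_mul_cancel _ hφ, one_pow]
  rw [parafermionicPoincareSeries, Nat.choose_two_right, mul_mul_mul_comm,
    hinv _ (by simp) D, hinv _ (by simp) _, one_mul]

theorem coeff_denominator_eq_coeff_parafermionicDualSeries (D : ℕ) {m : ℕ} (hm : m < 5) :
    coeff m ((1 - X : ℚ⟦X⟧) ^ D * (1 - X ^ 2) ^ D.choose 2) =
      coeff m (parafermionicDualSeries D) := by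
  have hfactor : (1 - X : ℚ⟦X⟧) ^ D * (1 - X ^ 2) ^ D.choose 2 =
      (1 - X) ^ (D + D.choose 2) * (1 + X) ^ D.choose 2 := by
    rw [pow_add, mul_assoc, ← mul_pow]; ring
  have hchoose : ((D.choose 2 : ℕ) : ℚ) = D * (D - 1) / 2 := Nat.cast_choose_two ℚ D
  rw [hfactor, coeff_mul, Finset.Nat.sum_antidiagonal_eq_sum_range_succ_mk]
  simp only [parafermionicDualSeries, map_sub, map_add, coeff_one, coeff_C_mul, coeff_X,
    coeff_X_pow, coeff_one_sub_X_pow, coeff_one_add_X_pow, Nat.cast_choose_eq_descPochhammer_div]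
  interval_cases m <;>
    simp only [Finset.sum_range_succ, Finset.sum_range_zero, Nat.reduceSub,
      Nat.reduceEqDiff, reduceIte, descPochhammer_succ_eval, descPochhammer_zero,
      Polynomial.eval_one, Nat.factorial, Nat.cast_mul, Nat.cast_add, Nat.cast_ofNat, Nat.cast_one,
      Nat.cast_zero, hchoose] <;> ring

theorem coeff_parafermionic_mul_eq_zero_of_le_four_general (D : ℕ) :
    ∀ n : ℕ, 1 ≤ n → n ≤ 4 →
      PowerSeries.coeff n (parafermionicPoincareSeries D * parafermionicDualSeries D) = 0 :=
  fun n hn1 hn4 ↦ coeff_mul_eq_zero_of_mul_eq_one_of_coeff_eq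
    (parafermionicPoincareSeries_mul_denominator_eq_one D)
    (fun _ hm ↦ (coeff_denominator_eq_coeff_parafermionicDualSeries D hm).symm)
    (by omega) (by omega : n < 5)

/-- The coefficients of `t`, `t²`, `t³` and `t⁴` in `P_B(t) · Q_B(t)` all vanish. -/
theorem coeff_parafermionic_mul_eq_zero_of_le_four (D : ℕ) (hD : 1 ≤ D) :
    ∀ n : ℕ, 1 ≤ n → n ≤ 4 →
      PowerSeries.coeff n (parafermionicPoincareSeries D * parafermionicDualSeries D) = 0 :=
  coeff_parafermionic_mul_eq_zero_of_le_four_general D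
end

section
/- For every integer D ≥ 1, the coefficient of t⁵ in the formal power series P_B(t)·Q_B(t) ∈ ℚ[[t]] equals (1/20)·D·(D²−1)·(D²−4), where P_B(t) = (1−t)^{−D}·(1−t²)^{−D(D−1)/2} and Q_B(t) = 1 − D t + (1/3)D(D²−1) t³ − (1/12)D²(D²−1) t⁴. In particular, for every D ≥ 3 one has P_B(t)·Q_B(t) ≠ 1. -/
/-!
The coefficients of `(1 - t)^{-d}` are the rising factorials `d^{(n)} / n!`, and `(1 - t²)^{-e}`
is the image of `(1 - t)^{-e}` under `t ↦ t²`. Hence every coefficient of `P_B` up to `t⁵` is an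
explicit polynomial in `D` (with `e = D(D-1)/2 = D.choose 2`, which also removes the truncated
subtractions), and the coefficient of `t⁵` in `P_B Q_B` is a polynomial identity in `D`. For
`D ≥ 3` that coefficient is positive, while the coefficient of `t⁵` in `1` vanishes.
-/

open PowerSeries

open Finset
open scoped Nat

namespace PowerSeries

variable {k : Type*} [Field k]

theorem inv_one_sub_X_pow_succ_eq_mk (d : ℕ) :
    (1 - X : k⟦X⟧)⁻¹ ^ (d + 1) = mk fun n ↦ ((d + n).choose d : k) := by
  have h : (1 - X : k⟦X⟧) ^ (d + 1) ≠ 0 :=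
    pow_ne_zero _ fun h ↦ by simpa using congrArg constantCoeff h
  refine mul_right_cancel₀ h ?_
  rw [mk_add_choose_mul_one_sub_pow_eq_one, ← mul_pow, PowerSeries.inv_mul_cancel _ (by simp),
    one_pow]

theorem coeff_inv_one_sub_X_pow [CharZero k] (d n : ℕ) :
    coeff n ((1 - X : k⟦X⟧)⁻¹ ^ d) = (ascPochhammer k n).eval (d : k) / n ! := by
  rcases d with _ | d
  · rcases n with _ | n <;> simp [coeff_one]
  · rw [inv_one_sub_X_pow_succ_eq_mk, coeff_mk,
      eq_div_iff (Nat.cast_ne_zero.2 n.factorial_ne_zero),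
      ascPochhammer_nat_eq_natCast_ascFactorial, Nat.ascFactorial_eq_factorial_mul_choose,
      Nat.choose_symm_add]
    push_cast; ring

theorem expand_inv_one_sub_X (p : ℕ) (hp : p ≠ 0) :
    expand p hp (1 - X : k⟦X⟧)⁻¹ = (1 - X ^ p)⁻¹ := by
  rw [PowerSeries.eq_inv_iff_mul_eq_one (by simp [hp])]
  have h := congrArg (expand p hp) (PowerSeries.inv_mul_cancel (1 - X : k⟦X⟧) (by simp))
  rwa [map_mul, map_one, map_sub, map_one, expand_X] at h

theorem inv_one_sub_X_pow_pow_eq_expand (p : ℕ) (hp : p ≠ 0) (e : ℕ) :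
    (1 - X ^ p : k⟦X⟧)⁻¹ ^ e = expand p hp ((1 - X)⁻¹ ^ e) := by
  rw [map_pow, expand_inv_one_sub_X]

end PowerSeries

theorem coeff_five_mul_parafermionicDualSeries (f : ℚ⟦X⟧) (D : ℕ) :
    coeff 5 (f * parafermionicDualSeries D) =
      coeff 5 f - D * coeff 4 f + D * (D ^ 2 - 1) / 3 * coeff 2 f
        - D ^ 2 * (D ^ 2 - 1) / 12 * coeff 1 f := by
  have h : f * parafermionicDualSeries D = f - C (D : ℚ) * (f * X ^ 1)
      + C ((D : ℚ) * (D ^ 2 - 1) / 3) * (f * X ^ 3)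
      - C ((D : ℚ) ^ 2 * (D ^ 2 - 1) / 12) * (f * X ^ 4) := by
    rw [parafermionicDualSeries]; ring
  rw [h]
  simp only [map_sub, map_add, coeff_C_mul, coeff_mul_X_pow']
  norm_num

theorem coeff_parafermionicPoincareSeries (D n : ℕ) :
    coeff n (parafermionicPoincareSeries D) =
      ∑ ij ∈ antidiagonal n, (ascPochhammer ℚ ij.1).eval (D : ℚ) / ij.1 ! *
        if 2 ∣ ij.2 then (ascPochhammer ℚ (ij.2 / 2)).eval (D.choose 2 : ℚ) / (ij.2 / 2)!
        else 0 := by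
  simp only [parafermionicPoincareSeries, inv_one_sub_X_pow_pow_eq_expand 2 two_ne_zero,
    coeff_mul, coeff_expand, coeff_inv_one_sub_X_pow, Nat.choose_two_right]

theorem coeff_five_parafermionic_mul_general (D : ℕ) :
    PowerSeries.coeff 5 (parafermionicPoincareSeries D * parafermionicDualSeries D) =
      (1 / 20 : ℚ) * (D : ℚ) * ((D : ℚ) ^ 2 - 1) * ((D : ℚ) ^ 2 - 4) ∧
    (3 ≤ D → parafermionicPoincareSeries D * parafermionicDualSeries D ≠ 1) := by
  have hcoeff : coeff 5 (parafermionicPoincareSeries D * parafermionicDualSeries D) =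
      1 / 20 * D * (D ^ 2 - 1) * (D ^ 2 - 4) := by
    simp [coeff_five_mul_parafermionicDualSeries, coeff_parafermionicPoincareSeries,
      Nat.antidiagonal_succ, ascPochhammer_succ_eval, Nat.cast_choose_two, Nat.factorial]
    ring
  refine ⟨hcoeff, fun hD h ↦ ?_⟩
  have hD3 : (3 : ℚ) ≤ D := by exact_mod_cast hD
  have hpos : (0 : ℚ) < 1 / 20 * D * (D ^ 2 - 1) * (D ^ 2 - 4) := by
    have h1 : (0 : ℚ) < D ^ 2 - 1 := by nlinarith
    have h4 : (0 : ℚ) < D ^ 2 - 4 := by nlinarith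
    have h0 : (0 : ℚ) < 1 / 20 * D := by positivity
    exact mul_pos (mul_pos h0 h1) h4
  rw [← hcoeff, h, coeff_one] at hpos
  simp at hpos

/-- The coefficient of `t⁵` in `P_B(t) · Q_B(t)` equals `(1/20) D (D²-1)(D²-4)`;
in particular `P_B(t) · Q_B(t) ≠ 1` for `D ≥ 3`. -/
theorem coeff_five_parafermionic_mul (D : ℕ) (hD : 1 ≤ D) :
    PowerSeries.coeff 5 (parafermionicPoincareSeries D * parafermionicDualSeries D) =
      (1 / 20 : ℚ) * (D : ℚ) * ((D : ℚ) ^ 2 - 1) * ((D : ℚ) ^ 2 - 4) ∧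
    (3 ≤ D → parafermionicPoincareSeries D * parafermionicDualSeries D ≠ 1) :=
  coeff_five_parafermionic_mul_general D
end

section
/- Let D ≥ 1 be an integer and E = ℂ^D. The linear span R_B of the set {[[x,y]_⊗, z]_⊗ : x, y, z ∈ E} inside E^{⊗3} has dimension D(D²−1)/3, where [u,v]_⊗ := u⊗v − v⊗u (so [[x,y]_⊗,z]_⊗ = x⊗y⊗z − y⊗x⊗z − z⊗x⊗y + z⊗y⊗x). -/
set_option maxSynthPendingDepth 5

open TensorProduct

/-- The relation space `R_B ⊂ (ℂ^D)^{⊗3}` of the parafermionic algebra: the linear span of the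
elements `[[x,y]_⊗, z]_⊗ = x⊗y⊗z - y⊗x⊗z - z⊗x⊗y + z⊗y⊗x` for `x, y, z ∈ ℂ^D`. -/
noncomputable def parafermionicRelations (D : ℕ) :
    Submodule ℂ ((Fin D → ℂ) ⊗[ℂ] ((Fin D → ℂ) ⊗[ℂ] (Fin D → ℂ))) :=
  Submodule.span ℂ
    {t | ∃ x y z : Fin D → ℂ,
      t = x ⊗ₜ[ℂ] (y ⊗ₜ[ℂ] z) - y ⊗ₜ[ℂ] (x ⊗ₜ[ℂ] z)
          - z ⊗ₜ[ℂ] (x ⊗ₜ[ℂ] y) + z ⊗ₜ[ℂ] (y ⊗ₜ[ℂ] x)}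

/-! The span is the range of the linear endomorphism `x ⊗ y ⊗ z ↦ [[x, y]_⊗, z]_⊗` of `M^{⊗3}`,
so for a basis `b` of `M` it is spanned by the images `[[b i, b j], b k]` of basis tensors.
Antisymmetry in `i, j` and the identity `[[b i, b j], b k] = [[b k, b j], b i] - [[b k, b i], b j]`
reduce these to the triples with `i < j` and `i ≤ k`. Restricted to the coordinates indexed by such
triples, `[[b i, b j], b k]` is `1` or `2` times the unit vector at `(i, j, k)`, so the reduced
family is linearly independent as soon as `2 ≠ 0`. For `M = ℂ^D` there are
`∑_{m < D} m (m + 1) = D (D² - 1) / 3` such triples. -/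

open Finset Module Submodule

namespace Parafermionic

section Bracket

variable (R M : Type*) [CommRing R] [AddCommGroup M] [Module R M]

/-- `(1 - c) ∘ (1 - s)`, where `s` swaps the first two factors and `c` moves the last factor to
the front. -/
noncomputable def tripleBracket : M ⊗[R] (M ⊗[R] M) →ₗ[R] M ⊗[R] (M ⊗[R] M) :=
  (LinearMap.id - ((TensorProduct.comm R (M ⊗[R] M) M).toLinearMap ∘ₗ
      (TensorProduct.assoc R M M M).symm.toLinearMap)) ∘ₗ
    (LinearMap.id - (TensorProduct.leftComm R M M M).toLinearMap)

variable {R M}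

@[simp]
theorem tripleBracket_tmul (x y z : M) :
    tripleBracket R M (x ⊗ₜ (y ⊗ₜ z)) =
      x ⊗ₜ (y ⊗ₜ z) - y ⊗ₜ (x ⊗ₜ z) - z ⊗ₜ (x ⊗ₜ y) + z ⊗ₜ (y ⊗ₜ x) := by
  simp only [tripleBracket, LinearMap.coe_comp, Function.comp_apply, LinearMap.sub_apply,
    LinearMap.id_coe, id_eq, LinearEquiv.coe_coe, leftComm_tmul, map_sub,
    assoc_symm_tmul, comm_tmul]
  abel

theorem tripleBracket_tmul_self (x z : M) : tripleBracket R M (x ⊗ₜ (x ⊗ₜ z)) = 0 := by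
  simp

theorem tripleBracket_tmul_swap (x y z : M) :
    tripleBracket R M (y ⊗ₜ (x ⊗ₜ z)) = -tripleBracket R M (x ⊗ₜ (y ⊗ₜ z)) := by
  simp only [tripleBracket_tmul]
  abel

theorem tripleBracket_tmul_eq_sub (x y z : M) :
    tripleBracket R M (x ⊗ₜ (y ⊗ₜ z)) =
      tripleBracket R M (z ⊗ₜ (y ⊗ₜ x)) - tripleBracket R M (z ⊗ₜ (x ⊗ₜ y)) := by
  simp only [tripleBracket_tmul]
  abel

theorem range_tripleBracket :
    LinearMap.range (tripleBracket R M) = span R {t | ∃ x y z : M,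
      t = x ⊗ₜ[R] (y ⊗ₜ[R] z) - y ⊗ₜ[R] (x ⊗ₜ[R] z)
          - z ⊗ₜ[R] (x ⊗ₜ[R] y) + z ⊗ₜ[R] (y ⊗ₜ[R] x)} := by
  refine le_antisymm ?_ (span_le.mpr ?_)
  · rintro _ ⟨t, rfl⟩
    induction t using TensorProduct.induction_on with
    | zero => simp
    | add t t' ht ht' => rw [map_add]; exact add_mem ht ht'
    | tmul x u =>
      induction u using TensorProduct.induction_on with
      | zero => simp
      | add u u' hu hu' => rw [tmul_add, map_add]; exact add_mem hu hu'
      | tmul y z => exact subset_span ⟨x, y, z, tripleBracket_tmul x y z⟩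
  · rintro _ ⟨x, y, z, rfl⟩
    exact ⟨x ⊗ₜ (y ⊗ₜ z), tripleBracket_tmul x y z⟩

end Bracket

section Basis

variable {R M ι : Type*} [CommRing R] [AddCommGroup M] [Module R M]

variable (R) in
noncomputable def bracketFamily (e : ι → M) (q : ι × ι × ι) : M ⊗[R] (M ⊗[R] M) :=
  tripleBracket R M (e q.1 ⊗ₜ (e q.2.1 ⊗ₜ e q.2.2))

theorem tripleBracket_tensorProduct_basis (b : Basis ι R M) (q : ι × ι × ι) :
    tripleBracket R M (b.tensorProduct (b.tensorProduct b) q) = bracketFamily R b q := by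
  simp only [Basis.tensorProduct_apply', bracketFamily]

theorem repr_bracketFamily (b : Basis ι R M) (q : ι × ι × ι) :
    (b.tensorProduct (b.tensorProduct b)).repr (bracketFamily R b q) =
      Finsupp.single q 1 - Finsupp.single (q.2.1, q.1, q.2.2) 1
        - Finsupp.single (q.2.2, q.1, q.2.1) 1 + Finsupp.single (q.2.2, q.2.1, q.1) 1 := by
  have h (i j k : ι) : b i ⊗ₜ (b j ⊗ₜ b k) = b.tensorProduct (b.tensorProduct b) (i, j, k) := by
    simp only [Basis.tensorProduct_apply]
  rw [bracketFamily, tripleBracket_tmul]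
  simp only [h, map_add, map_sub, Basis.repr_self]

variable [LinearOrder ι] [Fintype ι]

variable (ι) in
def bracketIndex : Finset (ι × ι × ι) :=
  {q | q.1 < q.2.1 ∧ q.1 ≤ q.2.2}

theorem mem_bracketIndex {q : ι × ι × ι} :
    q ∈ bracketIndex ι ↔ q.1 < q.2.1 ∧ q.1 ≤ q.2.2 := by
  simp [bracketIndex]

theorem bracketFamily_mem_span (e : ι → M) (q : ι × ι × ι) :
    bracketFamily R e q ∈
      span R (Set.range fun s : bracketIndex ι => bracketFamily R e s) := by
  set S := span R (Set.range fun s : bracketIndex ι => bracketFamily R e s)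
  have base {i j k : ι} (hij : i < j) (hik : i ≤ k) :
      tripleBracket R M (e i ⊗ₜ (e j ⊗ₜ e k)) ∈ S :=
    subset_span ⟨⟨(i, j, k), mem_bracketIndex.mpr ⟨hij, hik⟩⟩, rfl⟩
  have ordered {i j k : ι} (hij : i < j) : tripleBracket R M (e i ⊗ₜ (e j ⊗ₜ e k)) ∈ S := by
    rcases le_or_gt i k with hik | hki
    · exact base hij hik
    · rw [tripleBracket_tmul_eq_sub]
      exact sub_mem (base (hki.trans hij) hki.le) (base hki (hki.trans hij).le)
  obtain ⟨i, j, k⟩ := q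
  rw [bracketFamily]
  rcases lt_trichotomy i j with hij | rfl | hji
  · exact ordered hij
  · rw [tripleBracket_tmul_self]
    exact zero_mem S
  · rw [← neg_neg (tripleBracket R M _), ← tripleBracket_tmul_swap]
    exact neg_mem (ordered hji)

theorem range_tripleBracket_eq_span (b : Basis ι R M) :
    LinearMap.range (tripleBracket R M) =
      span R (Set.range fun s : bracketIndex ι => bracketFamily R b s) := by
  refine le_antisymm ?_ (span_le.mpr ?_)
  · rw [LinearMap.range_eq_map, ← (b.tensorProduct (b.tensorProduct b)).span_eq, map_span,
      span_le, ← Set.range_comp]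
    rintro _ ⟨q, rfl⟩
    rw [Function.comp_apply, tripleBracket_tensorProduct_basis]
    exact bracketFamily_mem_span b q
  · rintro _ ⟨s, rfl⟩
    exact LinearMap.mem_range_self (tripleBracket R M) _

theorem repr_bracketFamily_apply (b : Basis ι R M) {q r : ι × ι × ι}
    (hq : q ∈ bracketIndex ι) (hr : r ∈ bracketIndex ι) :
    (b.tensorProduct (b.tensorProduct b)).repr (bracketFamily R b q) r =
      if q = r then (if q.1 = q.2.2 then 2 else 1) else 0 := by
  obtain ⟨i, j, k⟩ := q
  obtain ⟨hij, hik⟩ := mem_bracketIndex.mp hq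
  have h₁ : (j, i, k) ≠ r := by
    rintro rfl
    exact (mem_bracketIndex.mp hr).1.not_gt hij
  have h₂ : (k, i, j) ≠ r := by
    rintro rfl
    exact (mem_bracketIndex.mp hr).1.not_ge hik
  rw [repr_bracketFamily]
  simp only [Finsupp.coe_add, Finsupp.coe_sub, Pi.add_apply, Pi.sub_apply, Finsupp.single_apply,
    if_neg h₁, if_neg h₂, sub_zero]
  rcases eq_or_ne i k with rfl | hik'
  · split_ifs <;> simp_all [one_add_one_eq_two]
  · have h₃ : (k, j, i) ≠ r := by
      rintro rfl
      exact hik' (hik.antisymm (mem_bracketIndex.mp hr).2)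
    simp [h₃, hik']

theorem linearIndependent_bracketFamily [IsDomain R] (h2 : (2 : R) ≠ 0) (b : Basis ι R M) :
    LinearIndependent R fun s : bracketIndex ι => bracketFamily R b s := by
  let restrict := Finsupp.lcomapDomain (M := R) (R := R) ((↑) : bracketIndex ι → ι × ι × ι)
    Subtype.val_injective ∘ₗ (b.tensorProduct (b.tensorProduct b)).repr.toLinearMap
  refine LinearIndependent.of_comp restrict ?_
  have diagonal : restrict ∘ (fun s : bracketIndex ι => bracketFamily R b s) =
      fun s => Finsupp.single s (if s.1.1 = s.1.2.2 then 2 else 1) := by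
    funext s
    ext t
    change (b.tensorProduct (b.tensorProduct b)).repr (bracketFamily R b s) t = _
    rw [repr_bracketFamily_apply b s.2 t.2, Finsupp.single_apply]
    simp only [Subtype.ext_iff]
  rw [diagonal]
  exact Finsupp.linearIndependent_single_of_ne_zero fun s => by split_ifs <;> simp [h2]

theorem finrank_range_tripleBracket [IsDomain R] (h2 : (2 : R) ≠ 0) (b : Basis ι R M) :
    finrank R (LinearMap.range (tripleBracket R M)) = #(bracketIndex ι) := by
  rw [range_tripleBracket_eq_span b, finrank_span_eq_card (linearIndependent_bracketFamily h2 b),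
    Fintype.card_coe]

end Basis

theorem card_bracketIndex {ι : Type*} [LinearOrder ι] [Fintype ι] [LocallyFiniteOrderTop ι] :
    #(bracketIndex ι) = ∑ i : ι, #(Ioi i) * #(Ici i) := by
  have indicator (i j k : ι) : (if i < j ∧ i ≤ k then 1 else 0 : ℕ) =
      (if i < j then 1 else 0) * (if i ≤ k then 1 else 0) := by
    rw [ite_zero_mul_ite_zero, mul_one]
  rw [bracketIndex, card_filter, Fintype.sum_prod_type]
  refine sum_congr rfl fun i _ => ?_
  rw [Fintype.sum_prod_type]
  simp_rw [indicator, ← mul_sum, ← sum_mul]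
  simp only [sum_boole, filter_lt_eq_Ioi, filter_le_eq_Ici, Nat.cast_id]

theorem three_mul_sum_range_mul_succ_add (n : ℕ) :
    3 * ∑ m ∈ range n, m * (m + 1) + n = n ^ 3 := by
  induction n with
  | zero => simp
  | succ n ih =>
    rw [sum_range_succ]
    linear_combination ih

theorem three_mul_card_bracketIndex_fin (n : ℕ) :
    3 * #(bracketIndex (Fin n)) = n * (n ^ 2 - 1) := by
  have reflect : ∑ i : Fin n, #(Ioi i) * #(Ici i) = ∑ m ∈ range n, m * (m + 1) := by
    simp only [Fin.card_Ioi, Fin.card_Ici]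
    rw [Fin.sum_univ_eq_sum_range (fun i => (n - 1 - i) * (n - i)),
      ← sum_range_reflect (fun m => m * (m + 1))]
    refine sum_congr rfl fun i hi => ?_
    have : n - 1 - i + 1 = n - i := by have := mem_range.mp hi; omega
    rw [this]
  rw [card_bracketIndex, reflect, Nat.mul_sub_one, ← pow_succ',
    ← three_mul_sum_range_mul_succ_add n, Nat.add_sub_cancel]

end Parafermionic

theorem finrank_parafermionicRelations_general (D : ℕ) :
    Module.finrank ℂ ↥(parafermionicRelations D) = D * (D ^ 2 - 1) / 3 := by
  rw [parafermionicRelations, ← Parafermionic.range_tripleBracket,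
    Parafermionic.finrank_range_tripleBracket two_ne_zero (Pi.basisFun ℂ (Fin D)),
    ← Parafermionic.three_mul_card_bracketIndex_fin, Nat.mul_div_cancel_left _ three_pos]

/-- The relation space `R_B` of the parafermionic algebra with `D` degrees of freedom has
dimension `D(D²-1)/3`. -/
theorem finrank_parafermionicRelations (D : ℕ) (hD : 1 ≤ D) :
    Module.finrank ℂ ↥(parafermionicRelations D) = D * (D ^ 2 - 1) / 3 :=
  finrank_parafermionicRelations_general D
end

section
/- Let D ≥ 1 be an integer, E = ℂ^D, and let R_B ⊂ E^{⊗3} be the linear span of {[[x,y]_⊗, z]_⊗ : x, y, z ∈ E}. Under the canonical identification of (E^{⊗3})* with (E*)^{⊗3}, the annihilator R_B^⊥ = {ω ∈ (E*)^{⊗3} : ω(r) = 0 for all r ∈ R_B} equals the linear span of the set {α⊗β⊗γ − γ⊗β⊗α : α, β, γ ∈ E*} ∪ {θ⊗θ⊗θ : θ ∈ E*}. -/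
/-!
Let `L = 1 - (12) - (123) + (13)` act on `(E*)^{⊗3}`. Then `⟨L ω, x ⊗ y ⊗ z⟩ = ⟨ω, [[x,y]_⊗, z]_⊗⟩`,
and the pairing is perfect, so `R_B^⊥ = ker L`. Both kinds of generators are killed by `L`.
Conversely, in the group algebra of `S₃` one has `6 = (2 - (23)) L + 3 (1 - (13)) + Σ_σ σ`, so for
`ω ∈ ker L` the tensor `6 ω` is `3 (ω - (13) ω)` plus the symmetrization of `ω`, and by polarization
symmetric tensors are spanned by the cubes `θ ⊗ θ ⊗ θ`.
-/

set_option maxSynthPendingDepth 5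

open TensorProduct

/-- The canonical pairing map `(E*)^{⊗3} → (E^{⊗3})*` for `E = ℂ^D`, sending `α⊗β⊗γ` to the
functional `x⊗y⊗z ↦ α(x)β(y)γ(z)`. -/
noncomputable def tripleDualPairing (D : ℕ) :
    (Module.Dual ℂ (Fin D → ℂ) ⊗[ℂ]
        (Module.Dual ℂ (Fin D → ℂ) ⊗[ℂ] Module.Dual ℂ (Fin D → ℂ))) →ₗ[ℂ]
      Module.Dual ℂ ((Fin D → ℂ) ⊗[ℂ] ((Fin D → ℂ) ⊗[ℂ] (Fin D → ℂ))) :=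
  (TensorProduct.dualDistrib ℂ (Fin D → ℂ) ((Fin D → ℂ) ⊗[ℂ] (Fin D → ℂ))).comp
    ((TensorProduct.dualDistrib ℂ (Fin D → ℂ) (Fin D → ℂ)).lTensor
      (Module.Dual ℂ (Fin D → ℂ)))

namespace TripleTensor

section Permutations

variable {R M : Type*} [CommSemiring R] [AddCommMonoid M] [Module R M]

def swap₁₂ : M ⊗[R] (M ⊗[R] M) →ₗ[R] M ⊗[R] (M ⊗[R] M) :=
  (leftComm R M M M).toLinearMap

def swap₂₃ : M ⊗[R] (M ⊗[R] M) →ₗ[R] M ⊗[R] (M ⊗[R] M) :=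
  (TensorProduct.comm R M M).toLinearMap.lTensor M

def cycle : M ⊗[R] (M ⊗[R] M) →ₗ[R] M ⊗[R] (M ⊗[R] M) :=
  (TensorProduct.assoc R M M M).toLinearMap ∘ₗ (TensorProduct.comm R M (M ⊗[R] M)).toLinearMap

def swap₁₃ : M ⊗[R] (M ⊗[R] M) →ₗ[R] M ⊗[R] (M ⊗[R] M) :=
  swap₁₂ ∘ₗ cycle

@[simp] theorem swap₁₂_tmul (a b c : M) : swap₁₂ (a ⊗ₜ[R] (b ⊗ₜ[R] c)) = b ⊗ₜ (a ⊗ₜ c) := rfl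

@[simp] theorem swap₂₃_tmul (a b c : M) : swap₂₃ (a ⊗ₜ[R] (b ⊗ₜ[R] c)) = a ⊗ₜ (c ⊗ₜ b) := rfl

@[simp] theorem cycle_tmul (a b c : M) : cycle (a ⊗ₜ[R] (b ⊗ₜ[R] c)) = b ⊗ₜ (c ⊗ₜ a) := rfl

@[simp] theorem swap₁₃_tmul (a b c : M) : swap₁₃ (a ⊗ₜ[R] (b ⊗ₜ[R] c)) = c ⊗ₜ (b ⊗ₜ a) := rfl

def symmetrize : M ⊗[R] (M ⊗[R] M) →ₗ[R] M ⊗[R] (M ⊗[R] M) :=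
  LinearMap.id + swap₁₂ + swap₂₃ + swap₁₃ + cycle + cycle ∘ₗ cycle

end Permutations

theorem apply_mem_of_forall_tmul_mem {R M N P Q : Type*} [CommSemiring R]
    [AddCommMonoid M] [AddCommMonoid N] [AddCommMonoid P] [AddCommMonoid Q]
    [Module R M] [Module R N] [Module R P] [Module R Q]
    (f : M ⊗[R] (N ⊗[R] P) →ₗ[R] Q) (S : Submodule R Q)
    (h : ∀ a b c, f (a ⊗ₜ (b ⊗ₜ c)) ∈ S) (w : M ⊗[R] (N ⊗[R] P)) : f w ∈ S := by
  induction w using TensorProduct.induction_on with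
  | zero => simp
  | tmul a m =>
    induction m using TensorProduct.induction_on with
    | zero => simp
    | tmul b c => exact h a b c
    | add m m' hm hm' => simpa only [tmul_add, map_add] using add_mem hm hm'
  | add w w' hw hw' => simpa only [map_add] using add_mem hw hw'

variable {R M : Type*} [CommRing R] [AddCommGroup M] [Module R M]

def parafermionicOp : M ⊗[R] (M ⊗[R] M) →ₗ[R] M ⊗[R] (M ⊗[R] M) :=
  LinearMap.id - swap₁₂ - cycle + swap₁₃

theorem parafermionicOp_tmul (a b c : M) :
    parafermionicOp (a ⊗ₜ[R] (b ⊗ₜ[R] c)) =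
      a ⊗ₜ (b ⊗ₜ c) - b ⊗ₜ (a ⊗ₜ c) - b ⊗ₜ (c ⊗ₜ a) + c ⊗ₜ (b ⊗ₜ a) := rfl

variable (R M) in
def parafermionicDualGenerators : Set (M ⊗[R] (M ⊗[R] M)) :=
  {ω | ∃ α β γ : M, ω = α ⊗ₜ[R] (β ⊗ₜ[R] γ) - γ ⊗ₜ[R] (β ⊗ₜ[R] α)} ∪
    {ω | ∃ θ : M, ω = θ ⊗ₜ[R] (θ ⊗ₜ[R] θ)}

theorem span_parafermionicDualGenerators_le_ker :
    Submodule.span R (parafermionicDualGenerators R M) ≤ LinearMap.ker parafermionicOp := by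
  rw [Submodule.span_le]
  rintro ω (⟨α, β, γ, rfl⟩ | ⟨θ, rfl⟩) <;>
    simp only [SetLike.mem_coe, LinearMap.mem_ker, map_sub, parafermionicOp_tmul] <;> abel

theorem sub_swap₁₃_mem_span (w : M ⊗[R] (M ⊗[R] M)) :
    w - swap₁₃ w ∈ Submodule.span R (parafermionicDualGenerators R M) := by
  refine apply_mem_of_forall_tmul_mem (LinearMap.id - swap₁₃) _ (fun a b c => ?_) w
  exact Submodule.subset_span (Or.inl ⟨a, b, c, rfl⟩)

theorem symmetrize_tmul_eq_polarization (a b c : M) :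
    symmetrize (a ⊗ₜ[R] (b ⊗ₜ[R] c)) =
      (a + b + c) ⊗ₜ ((a + b + c) ⊗ₜ (a + b + c)) - (a + b) ⊗ₜ ((a + b) ⊗ₜ (a + b))
        - (a + c) ⊗ₜ ((a + c) ⊗ₜ (a + c)) - (b + c) ⊗ₜ ((b + c) ⊗ₜ (b + c))
        + a ⊗ₜ (a ⊗ₜ a) + b ⊗ₜ (b ⊗ₜ b) + c ⊗ₜ (c ⊗ₜ c) := by
  simp only [symmetrize, LinearMap.add_apply, LinearMap.id_apply, LinearMap.comp_apply,
    swap₁₂_tmul, swap₂₃_tmul, swap₁₃_tmul, cycle_tmul, tmul_add, add_tmul]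
  abel

theorem symmetrize_mem_span (w : M ⊗[R] (M ⊗[R] M)) :
    symmetrize w ∈ Submodule.span R (parafermionicDualGenerators R M) := by
  have cube_mem (θ : M) :
      θ ⊗ₜ[R] (θ ⊗ₜ[R] θ) ∈ Submodule.span R (parafermionicDualGenerators R M) :=
    Submodule.subset_span (Or.inr ⟨θ, rfl⟩)
  refine apply_mem_of_forall_tmul_mem _ _ (fun a b c => ?_) w
  rw [symmetrize_tmul_eq_polarization]
  repeat first | apply add_mem | apply sub_mem | apply cube_mem

theorem six_smul_id_eq :
    (6 : R) • (LinearMap.id : M ⊗[R] (M ⊗[R] M) →ₗ[R] _) =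
      (2 : R) • parafermionicOp - swap₂₃ ∘ₗ parafermionicOp + (3 : R) • (LinearMap.id - swap₁₃)
        + symmetrize := by
  refine ext_threefold' fun a b c => ?_
  simp only [parafermionicOp, symmetrize, LinearMap.add_apply, LinearMap.sub_apply,
    LinearMap.smul_apply, LinearMap.comp_apply, LinearMap.id_apply, map_add, map_sub,
    swap₁₂_tmul, swap₂₃_tmul, swap₁₃_tmul, cycle_tmul]
  module

theorem ker_parafermionicOp (h6 : IsUnit (6 : R)) :
    LinearMap.ker (parafermionicOp : M ⊗[R] (M ⊗[R] M) →ₗ[R] _) =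
      Submodule.span R (parafermionicDualGenerators R M) := by
  refine le_antisymm (fun ω hω => ?_) span_parafermionicDualGenerators_le_ker
  have h : (6 : R) • ω = (3 : R) • (ω - swap₁₃ ω) + symmetrize ω := by
    simpa [LinearMap.mem_ker.mp hω] using LinearMap.congr_fun six_smul_id_eq ω
  rw [← Submodule.smul_mem_iff_of_isUnit _ h6, h]
  exact add_mem (Submodule.smul_mem _ _ (sub_swap₁₃_mem_span ω)) (symmetrize_mem_span ω)

end TripleTensor

open TripleTensor

theorem tripleDualPairing_tmul {D : ℕ} (α β γ : Module.Dual ℂ (Fin D → ℂ)) (x y z : Fin D → ℂ) :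
    tripleDualPairing D (α ⊗ₜ (β ⊗ₜ γ)) (x ⊗ₜ (y ⊗ₜ z)) = α x * (β y * γ z) := rfl

theorem tripleDualPairing_injective (D : ℕ) : Function.Injective (tripleDualPairing D) :=
  ((dualDistribEquiv ℂ _ _).lTensor _ |>.trans (dualDistribEquiv ℂ _ _)).injective

theorem tripleDualPairing_parafermionicOp {D : ℕ}
    (ω : Module.Dual ℂ (Fin D → ℂ) ⊗[ℂ] (Module.Dual ℂ (Fin D → ℂ) ⊗[ℂ] Module.Dual ℂ (Fin D → ℂ)))
    (x y z : Fin D → ℂ) :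
    tripleDualPairing D (parafermionicOp ω) (x ⊗ₜ (y ⊗ₜ z)) =
      tripleDualPairing D ω (x ⊗ₜ[ℂ] (y ⊗ₜ[ℂ] z) - y ⊗ₜ[ℂ] (x ⊗ₜ[ℂ] z)
        - z ⊗ₜ[ℂ] (x ⊗ₜ[ℂ] y) + z ⊗ₜ[ℂ] (y ⊗ₜ[ℂ] x)) := by
  have h : LinearMap.applyₗ (x ⊗ₜ (y ⊗ₜ z)) ∘ₗ tripleDualPairing D ∘ₗ parafermionicOp =
      LinearMap.applyₗ (x ⊗ₜ[ℂ] (y ⊗ₜ[ℂ] z) - y ⊗ₜ[ℂ] (x ⊗ₜ[ℂ] z)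
        - z ⊗ₜ[ℂ] (x ⊗ₜ[ℂ] y) + z ⊗ₜ[ℂ] (y ⊗ₜ[ℂ] x)) ∘ₗ tripleDualPairing D := by
    refine ext_threefold' fun α β γ => ?_
    simp only [LinearMap.comp_apply, LinearMap.applyₗ_apply_apply, parafermionicOp_tmul, map_sub,
      map_add, LinearMap.sub_apply, LinearMap.add_apply, tripleDualPairing_tmul]
    ring
  exact LinearMap.congr_fun h ω

theorem comap_dualAnnihilator_parafermionicRelations (D : ℕ) :
    (parafermionicRelations D).dualAnnihilator.comap (tripleDualPairing D) =
      LinearMap.ker parafermionicOp := by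
  ext ω
  rw [Submodule.mem_comap, Submodule.mem_dualAnnihilator, LinearMap.mem_ker,
    ← (tripleDualPairing_injective D).eq_iff, map_zero]
  constructor
  · intro h
    refine ext_threefold' fun x y z => ?_
    rw [tripleDualPairing_parafermionicOp, LinearMap.zero_apply]
    exact h _ (Submodule.subset_span ⟨x, y, z, rfl⟩)
  · intro h w hw
    refine (Submodule.span_le (p := LinearMap.ker _)).mpr ?_ hw
    rintro _ ⟨x, y, z, rfl⟩
    rw [SetLike.mem_coe, LinearMap.mem_ker, ← tripleDualPairing_parafermionicOp, h,
      LinearMap.zero_apply]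

theorem annihilator_parafermionicRelations_general (D : ℕ) :
    Submodule.comap (tripleDualPairing D) (parafermionicRelations D).dualAnnihilator =
      Submodule.span ℂ
        ({ω | ∃ α β γ : Module.Dual ℂ (Fin D → ℂ),
            ω = α ⊗ₜ[ℂ] (β ⊗ₜ[ℂ] γ) - γ ⊗ₜ[ℂ] (β ⊗ₜ[ℂ] α)} ∪
          {ω | ∃ θ : Module.Dual ℂ (Fin D → ℂ), ω = θ ⊗ₜ[ℂ] (θ ⊗ₜ[ℂ] θ)}) := by
  rw [comap_dualAnnihilator_parafermionicRelations]
  exact ker_parafermionicOp (isUnit_iff_ne_zero.mpr (by norm_num))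

/-- The annihilator of `R_B` inside `(E*)^{⊗3}` for `E = ℂ^D` (under the canonical
identification of `(E^{⊗3})*` with `(E*)^{⊗3}`) is the linear span of the elements
`α⊗β⊗γ - γ⊗β⊗α` and `θ⊗θ⊗θ` for `α, β, γ, θ ∈ E*`. -/
theorem annihilator_parafermionicRelations (D : ℕ) (hD : 1 ≤ D) :
    Submodule.comap (tripleDualPairing D) (parafermionicRelations D).dualAnnihilator =
      Submodule.span ℂ
        ({ω | ∃ α β γ : Module.Dual ℂ (Fin D → ℂ),
            ω = α ⊗ₜ[ℂ] (β ⊗ₜ[ℂ] γ) - γ ⊗ₜ[ℂ] (β ⊗ₜ[ℂ] α)} ∪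
          {ω | ∃ θ : Module.Dual ℂ (Fin D → ℂ), ω = θ ⊗ₜ[ℂ] (θ ⊗ₜ[ℂ] θ)}) :=
  annihilator_parafermionicRelations_general D
end

section
/- Let D ≥ 1 be an integer, E = ℂ^D with canonical basis (e_k), (θ^k) the dual basis of E*, and let R_P ⊂ E^{⊗3} be the span of the Knuth relation tensors. Under the canonical identification of (E^{⊗3})* with (E*)^{⊗3}, the annihilator R_P^⊥ = {ω ∈ (E*)^{⊗3} : ω(r) = 0 for all r ∈ R_P} equals the linear span of the elements θ^j⊗θ^k⊗θ^i + θ^j⊗θ^i⊗θ^k for i < j ≤ k, θ^i⊗θ^k⊗θ^j + θ^k⊗θ^i⊗θ^j for i ≤ j < k, θ^i⊗θ^j⊗θ^k for i ≤ j ≤ k, and θ^k⊗θ^j⊗θ^i for i < j < k (indices in {1,…,D}). -/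
/-! Pairing with the basis `θ^a ⊗ θ^b ⊗ θ^c` identifies `ω` with its coefficient function on
words `abc`, and `ω` kills `e_u - e_v` exactly when its coefficients at `u` and `v` agree. Each
word of length three has at most one Knuth partner, so everything is governed by the partner
involution `σ`: `R_P` is spanned by the `e_t - e_{σ t}`, so its annihilator consists of the
`σ`-invariant coefficient functions; as `2` is invertible, these form the span of the
`θ_t + θ_{σ t}`, and that is also the span of the given generators. -/

set_option maxSynthPendingDepth 5

open TensorProduct

/-- The canonical basis vector `e_k` of `ℂ^D`. -/
noncomputable def stdBasis (D : ℕ) (k : Fin D) : Fin D → ℂ := Pi.single k 1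

/-- The dual basis functional `θ^k` on `ℂ^D`, with `θ^k(e_ℓ) = δ_{kℓ}`. -/
noncomputable def dualBasisFun (D : ℕ) (k : Fin D) : Module.Dual ℂ (Fin D → ℂ) :=
  LinearMap.proj k

/-- The relation space `R_P ⊂ (ℂ^D)^{⊗3}` of the plactic algebra: the span of the Knuth
relation tensors `e_ℓ⊗e_m⊗e_k - e_ℓ⊗e_k⊗e_m` for `k < ℓ ≤ m` and
`e_k⊗e_m⊗e_ℓ - e_m⊗e_k⊗e_ℓ` for `k ≤ ℓ < m`. -/
noncomputable def placticRelations (D : ℕ) :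
    Submodule ℂ ((Fin D → ℂ) ⊗[ℂ] ((Fin D → ℂ) ⊗[ℂ] (Fin D → ℂ))) :=
  Submodule.span ℂ
    ({t | ∃ k l m : Fin D, k < l ∧ l ≤ m ∧
        t = stdBasis D l ⊗ₜ[ℂ] (stdBasis D m ⊗ₜ[ℂ] stdBasis D k)
            - stdBasis D l ⊗ₜ[ℂ] (stdBasis D k ⊗ₜ[ℂ] stdBasis D m)} ∪
      {t | ∃ k l m : Fin D, k ≤ l ∧ l < m ∧
        t = stdBasis D k ⊗ₜ[ℂ] (stdBasis D m ⊗ₜ[ℂ] stdBasis D l)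
            - stdBasis D m ⊗ₜ[ℂ] (stdBasis D k ⊗ₜ[ℂ] stdBasis D l)})

open Function Module Submodule

section KnuthPartner

variable {α : Type*} [LinearOrder α]

/-- Every word of length three is Knuth-equivalent to at most one other word, through
`yzx ≡ yxz` (`x < y ≤ z`) or `xzy ≡ zxy` (`x ≤ y < z`); `knuthPartner` sends a word to that
partner, and fixes it if there is none. -/
def knuthPartner : α × α × α → α × α × α
  | (a, b, c) =>
    if a ≤ b then
      if b ≤ c then (a, b, c) else if c < a then (a, c, b) else (b, a, c)
    else
      if a ≤ c then (a, c, b) else if b ≤ c then (b, a, c) else (a, b, c)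

variable {i j k : α}

theorem knuthPartner_of_le_of_le (hij : i ≤ j) (hjk : j ≤ k) :
    knuthPartner (i, j, k) = (i, j, k) := by
  simp [knuthPartner, hij, hjk]

theorem knuthPartner_of_lt_of_lt (hij : i < j) (hjk : j < k) :
    knuthPartner (k, j, i) = (k, j, i) := by
  simp [knuthPartner, hjk.not_ge, hij.not_ge, (hij.trans hjk).not_ge]

theorem knuthPartner_of_lt_of_le (hij : i < j) (hjk : j ≤ k) :
    knuthPartner (j, k, i) = (j, i, k) := by
  simp [knuthPartner, hij, hjk, hij.trans_le hjk]

theorem knuthPartner_of_le_of_lt (hij : i ≤ j) (hjk : j < k) :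
    knuthPartner (i, k, j) = (k, i, j) := by
  simp [knuthPartner, hij.trans_lt hjk |>.le, hjk.not_ge, hij.not_gt]

theorem knuthPartner_induction {p : α × α × α → Prop} (hσ : ∀ t, p t → p (knuthPartner t))
    (hinc : ∀ i j k, i ≤ j → j ≤ k → p (i, j, k)) (hdec : ∀ i j k, i < j → j < k → p (k, j, i))
    (hfst : ∀ i j k, i < j → j ≤ k → p (j, k, i)) (hsnd : ∀ i j k, i ≤ j → j < k → p (i, k, j))
    (t : α × α × α) : p t := by
  obtain ⟨a, b, c⟩ := t
  rcases le_or_gt a b with hab | hba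
  · rcases le_or_gt b c with hbc | hcb
    · exact hinc a b c hab hbc
    · rcases lt_or_ge c a with hca | hac
      · exact hfst c a b hca hab
      · exact hsnd a c b hac hcb
  · rcases le_or_gt a c with hac | hca
    · exact knuthPartner_of_lt_of_le hba hac ▸ hσ _ (hfst b a c hba hac)
    · rcases le_or_gt b c with hbc | hcb
      · exact knuthPartner_of_le_of_lt hbc hca ▸ hσ _ (hsnd b c a hbc hca)
      · exact hdec c b a hcb hba

theorem knuthPartner_involutive : Involutive (knuthPartner (α := α)) := by
  rintro ⟨a, b, c⟩
  simp only [knuthPartner]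
  split_ifs <;> simp_all <;> order

end KnuthPartner

namespace Module.Basis

variable {ι R M : Type*}

theorem mem_span_range_add_comp_iff [Fintype ι] [Semiring R] [Invertible (2 : R)]
    [AddCommMonoid M] [Module R M] (b : Basis ι R M) {σ : ι → ι} (hσ : Involutive σ) (x : M) :
    x ∈ span R (Set.range fun i => b i + b (σ i)) ↔ ∀ i, b.repr x (σ i) = b.repr x i := by
  classical
  constructor
  · intro hx
    induction hx using Submodule.span_induction with
    | mem y hy =>
      obtain ⟨j, rfl⟩ := hy
      intro i
      simp only [map_add, repr_self, Finsupp.add_apply, Finsupp.single_apply, hσ.eq_iff, hσ i]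
      exact add_comm _ _
    | zero => simp
    | add y z _ _ hy hz => simp [hy, hz]
    | smul r y _ hy => simp [hy]
  · intro hx
    have hsum : ∑ i, b.repr x i • b (σ i) = x := by
      conv_rhs => rw [← b.sum_repr x]
      exact Fintype.sum_bijective σ hσ.bijective _ _ fun i => by rw [hx]
    have hx2 : x = (⅟2 : R) • ∑ i, b.repr x i • (b i + b (σ i)) := by
      simp only [smul_add, Finset.sum_add_distrib, b.sum_repr, hsum,
        invOf_two_smul_add_invOf_two_smul]
    rw [hx2]
    exact smul_mem _ _ (sum_mem fun i _ => smul_mem _ _ (subset_span ⟨i, rfl⟩))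

theorem mem_comap_dualAnnihilator_span_range_sub_iff [CommRing R] [AddCommGroup M] [Module R M]
    {N : Type*} [AddCommGroup N] [Module R N] (φ : N →ₗ[R] Dual R M) (b : Basis ι R N)
    {e : ι → M} (he : ∀ i, φ.flip (e i) = b.coord i) (σ : ι → ι) (x : N) :
    x ∈ (span R (Set.range fun i => e i - e (σ i))).dualAnnihilator.comap φ ↔
      ∀ i, b.repr x (σ i) = b.repr x i := by
  have hφ : ∀ i, φ x (e i) = b.repr x i := fun i => LinearMap.congr_fun (he i) x
  rw [mem_comap, ← SetLike.mem_coe, coe_dualAnnihilator_span]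
  simp only [Set.mem_ofPred_eq, Set.range_subset_iff, SetLike.mem_coe, LinearMap.mem_ker, map_sub,
    hφ, sub_eq_zero]
  exact forall_congr' fun i => eq_comm

end Module.Basis

noncomputable def tripleDualBasis (D : ℕ) :
    Basis (Fin D × Fin D × Fin D) ℂ
      (Dual ℂ (Fin D → ℂ) ⊗[ℂ] (Dual ℂ (Fin D → ℂ) ⊗[ℂ] Dual ℂ (Fin D → ℂ))) :=
  let θ := (Pi.basisFun ℂ (Fin D)).dualBasis
  θ.tensorProduct (θ.tensorProduct θ)

theorem tripleDualBasis_apply (D : ℕ) (i j k : Fin D) :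
    tripleDualBasis D (i, j, k) =
      dualBasisFun D i ⊗ₜ[ℂ] (dualBasisFun D j ⊗ₜ[ℂ] dualBasisFun D k) := by
  have hθ (l : Fin D) : (Pi.basisFun ℂ (Fin D)).dualBasis l = dualBasisFun D l := by
    ext x
    simp [dualBasisFun]
  simp [tripleDualBasis, Basis.tensorProduct_apply, hθ]

noncomputable def tripleStd (D : ℕ) (t : Fin D × Fin D × Fin D) :
    (Fin D → ℂ) ⊗[ℂ] ((Fin D → ℂ) ⊗[ℂ] (Fin D → ℂ)) :=
  stdBasis D t.1 ⊗ₜ[ℂ] (stdBasis D t.2.1 ⊗ₜ[ℂ] stdBasis D t.2.2)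

theorem tripleDualPairing_flip_tripleStd (D : ℕ) (t : Fin D × Fin D × Fin D) :
    (tripleDualPairing D).flip (tripleStd D t) = (tripleDualBasis D).coord t := by
  refine (tripleDualBasis D).ext fun s => ?_
  rw [Basis.coord_apply, Basis.repr_self]
  obtain ⟨a, b, c⟩ := s
  obtain ⟨x, y, z⟩ := t
  simp only [tripleDualBasis_apply, tripleStd, tripleDualPairing, dualBasisFun, stdBasis,
    LinearMap.flip_apply, LinearMap.comp_apply, LinearMap.lTensor_tmul, dualDistrib_apply,
    LinearMap.proj_apply, Pi.single_apply, Finsupp.single_apply, Prod.ext_iff]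
  split_ifs <;> simp_all

theorem placticRelations_eq_span_knuthPartner (D : ℕ) :
    placticRelations D =
      span ℂ (Set.range fun t => tripleStd D t - tripleStd D (knuthPartner t)) := by
  apply le_antisymm
  · refine span_mono ?_
    rintro r (⟨k, l, m, hkl, hlm, rfl⟩ | ⟨k, l, m, hkl, hlm, rfl⟩)
    · exact ⟨(l, m, k), by simp only [knuthPartner_of_lt_of_le hkl hlm, tripleStd]⟩
    · exact ⟨(k, m, l), by simp only [knuthPartner_of_le_of_lt hkl hlm, tripleStd]⟩
  · rw [span_le, Set.range_subset_iff]
    refine knuthPartner_induction (fun t ht => ?_) (fun i j k hij hjk => ?_)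
      (fun i j k hij hjk => ?_) (fun i j k hij hjk => ?_) (fun i j k hij hjk => ?_)
    · rw [knuthPartner_involutive t, ← neg_sub]
      exact neg_mem ht
    · simp [knuthPartner_of_le_of_le hij hjk]
    · simp [knuthPartner_of_lt_of_lt hij hjk]
    · rw [knuthPartner_of_lt_of_le hij hjk]
      exact subset_span (Or.inl ⟨i, j, k, hij, hjk, rfl⟩)
    · rw [knuthPartner_of_le_of_lt hij hjk]
      exact subset_span (Or.inr ⟨i, j, k, hij, hjk, rfl⟩)

noncomputable def annihilatorGenerators (D : ℕ) :
    Set (Dual ℂ (Fin D → ℂ) ⊗[ℂ] (Dual ℂ (Fin D → ℂ) ⊗[ℂ] Dual ℂ (Fin D → ℂ))) :=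
  {ω | ∃ i j k : Fin D, i < j ∧ j ≤ k ∧
      ω = dualBasisFun D j ⊗ₜ[ℂ] (dualBasisFun D k ⊗ₜ[ℂ] dualBasisFun D i)
          + dualBasisFun D j ⊗ₜ[ℂ] (dualBasisFun D i ⊗ₜ[ℂ] dualBasisFun D k)} ∪
    {ω | ∃ i j k : Fin D, i ≤ j ∧ j < k ∧
      ω = dualBasisFun D i ⊗ₜ[ℂ] (dualBasisFun D k ⊗ₜ[ℂ] dualBasisFun D j)
          + dualBasisFun D k ⊗ₜ[ℂ] (dualBasisFun D i ⊗ₜ[ℂ] dualBasisFun D j)} ∪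
    {ω | ∃ i j k : Fin D, i ≤ j ∧ j ≤ k ∧
      ω = dualBasisFun D i ⊗ₜ[ℂ] (dualBasisFun D j ⊗ₜ[ℂ] dualBasisFun D k)} ∪
    {ω | ∃ i j k : Fin D, i < j ∧ j < k ∧
      ω = dualBasisFun D k ⊗ₜ[ℂ] (dualBasisFun D j ⊗ₜ[ℂ] dualBasisFun D i)}

theorem span_annihilatorGenerators (D : ℕ) :
    span ℂ (annihilatorGenerators D) =
      span ℂ (Set.range fun t => tripleDualBasis D t + tripleDualBasis D (knuthPartner t)) := by
  set B := tripleDualBasis D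
  apply le_antisymm
  · have hfixed {t} (ht : knuthPartner t = t) :
        B t ∈ span ℂ (Set.range fun t => B t + B (knuthPartner t)) := by
      rw [← invOf_two_smul_add_invOf_two_smul ℂ (B t), ← smul_add]
      exact smul_mem _ _ (subset_span ⟨t, by simp only [ht]⟩)
    rw [span_le]
    rintro ω (((⟨i, j, k, hij, hjk, rfl⟩ | ⟨i, j, k, hij, hjk, rfl⟩) | ⟨i, j, k, hij, hjk, rfl⟩) |
      ⟨i, j, k, hij, hjk, rfl⟩)
    · exact subset_span
        ⟨(j, k, i), by simp only [knuthPartner_of_lt_of_le hij hjk, B, tripleDualBasis_apply]⟩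
    · exact subset_span
        ⟨(i, k, j), by simp only [knuthPartner_of_le_of_lt hij hjk, B, tripleDualBasis_apply]⟩
    · simpa only [B, tripleDualBasis_apply, SetLike.mem_coe]
        using hfixed (knuthPartner_of_le_of_le hij hjk)
    · simpa only [B, tripleDualBasis_apply, SetLike.mem_coe]
        using hfixed (knuthPartner_of_lt_of_lt hij hjk)
  · rw [span_le, Set.range_subset_iff]
    refine knuthPartner_induction (fun t ht => ?_) (fun i j k hij hjk => ?_)
      (fun i j k hij hjk => ?_) (fun i j k hij hjk => ?_) (fun i j k hij hjk => ?_)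
    · rwa [knuthPartner_involutive t, add_comm]
    · have h : B (i, j, k) ∈ annihilatorGenerators D :=
        Or.inl (Or.inr ⟨i, j, k, hij, hjk, tripleDualBasis_apply D i j k⟩)
      rw [knuthPartner_of_le_of_le hij hjk]
      exact add_mem (subset_span h) (subset_span h)
    · have h : B (k, j, i) ∈ annihilatorGenerators D :=
        Or.inr ⟨i, j, k, hij, hjk, tripleDualBasis_apply D k j i⟩
      rw [knuthPartner_of_lt_of_lt hij hjk]
      exact add_mem (subset_span h) (subset_span h)
    · rw [knuthPartner_of_lt_of_le hij hjk]
      exact subset_span (Or.inl (Or.inl (Or.inl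
        ⟨i, j, k, hij, hjk, by simp only [B, tripleDualBasis_apply]⟩)))
    · rw [knuthPartner_of_le_of_lt hij hjk]
      exact subset_span (Or.inl (Or.inl (Or.inr
        ⟨i, j, k, hij, hjk, by simp only [B, tripleDualBasis_apply]⟩)))

theorem annihilator_placticRelations_general (D : ℕ) :
    Submodule.comap (tripleDualPairing D) (placticRelations D).dualAnnihilator =
      Submodule.span ℂ
        ({ω | ∃ i j k : Fin D, i < j ∧ j ≤ k ∧
            ω = dualBasisFun D j ⊗ₜ[ℂ] (dualBasisFun D k ⊗ₜ[ℂ] dualBasisFun D i)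
                + dualBasisFun D j ⊗ₜ[ℂ] (dualBasisFun D i ⊗ₜ[ℂ] dualBasisFun D k)} ∪
          {ω | ∃ i j k : Fin D, i ≤ j ∧ j < k ∧
            ω = dualBasisFun D i ⊗ₜ[ℂ] (dualBasisFun D k ⊗ₜ[ℂ] dualBasisFun D j)
                + dualBasisFun D k ⊗ₜ[ℂ] (dualBasisFun D i ⊗ₜ[ℂ] dualBasisFun D j)} ∪
          {ω | ∃ i j k : Fin D, i ≤ j ∧ j ≤ k ∧
            ω = dualBasisFun D i ⊗ₜ[ℂ] (dualBasisFun D j ⊗ₜ[ℂ] dualBasisFun D k)} ∪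
          {ω | ∃ i j k : Fin D, i < j ∧ j < k ∧
            ω = dualBasisFun D k ⊗ₜ[ℂ] (dualBasisFun D j ⊗ₜ[ℂ] dualBasisFun D i)}) := by
  ext ω
  change _ ↔ ω ∈ span ℂ (annihilatorGenerators D)
  rw [span_annihilatorGenerators,
    (tripleDualBasis D).mem_span_range_add_comp_iff knuthPartner_involutive,
    placticRelations_eq_span_knuthPartner,
    (tripleDualBasis D).mem_comap_dualAnnihilator_span_range_sub_iff _
      (tripleDualPairing_flip_tripleStd D)]

/-- The annihilator of the plactic relation space `R_P` inside `(E*)^{⊗3}` for `E = ℂ^D`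
is spanned by `θ^j⊗θ^k⊗θ^i + θ^j⊗θ^i⊗θ^k` for `i < j ≤ k`,
`θ^i⊗θ^k⊗θ^j + θ^k⊗θ^i⊗θ^j` for `i ≤ j < k`, `θ^i⊗θ^j⊗θ^k` for `i ≤ j ≤ k`, and
`θ^k⊗θ^j⊗θ^i` for `i < j < k`. -/
theorem annihilator_placticRelations (D : ℕ) (hD : 1 ≤ D) :
    Submodule.comap (tripleDualPairing D) (placticRelations D).dualAnnihilator =
      Submodule.span ℂ
        ({ω | ∃ i j k : Fin D, i < j ∧ j ≤ k ∧
            ω = dualBasisFun D j ⊗ₜ[ℂ] (dualBasisFun D k ⊗ₜ[ℂ] dualBasisFun D i)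
                + dualBasisFun D j ⊗ₜ[ℂ] (dualBasisFun D i ⊗ₜ[ℂ] dualBasisFun D k)} ∪
          {ω | ∃ i j k : Fin D, i ≤ j ∧ j < k ∧
            ω = dualBasisFun D i ⊗ₜ[ℂ] (dualBasisFun D k ⊗ₜ[ℂ] dualBasisFun D j)
                + dualBasisFun D k ⊗ₜ[ℂ] (dualBasisFun D i ⊗ₜ[ℂ] dualBasisFun D j)} ∪
          {ω | ∃ i j k : Fin D, i ≤ j ∧ j ≤ k ∧
            ω = dualBasisFun D i ⊗ₜ[ℂ] (dualBasisFun D j ⊗ₜ[ℂ] dualBasisFun D k)} ∪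
          {ω | ∃ i j k : Fin D, i < j ∧ j < k ∧
            ω = dualBasisFun D k ⊗ₜ[ℂ] (dualBasisFun D j ⊗ₜ[ℂ] dualBasisFun D i)}) :=
  annihilator_placticRelations_general D
end

section
/- Let V be a finite-dimensional complex vector space and let A be the quotient of the tensor algebra T(V) by the two-sided ideal generated by the set {α⊗β⊗γ − γ⊗β⊗α : α, β, γ ∈ V} ∪ {θ⊗θ⊗θ : θ ∈ V}. Then the product (in A) of any five elements of V is zero: for all α₁, …, α₅ ∈ V, the image of α₁⊗α₂⊗α₃⊗α₄⊗α₅ in A vanishes. -/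
/-- The relation identifying the generators of the two-sided ideal of `T(V)` generated by
`α⊗β⊗γ - γ⊗β⊗α` and `θ⊗θ⊗θ` (for `α, β, γ, θ ∈ V`) with `0`; the quotient `RingQuot` of
`T(V)` by this relation is the quotient of `T(V)` by that two-sided ideal: it is the dual
cubic algebra `B^!` of the parafermionic algebra. -/
def parafermionicDualRel (V : Type*) [AddCommGroup V] [Module ℂ V]
    (a b : TensorAlgebra ℂ V) : Prop :=
  ((∃ α β γ : V,
      a = TensorAlgebra.ι ℂ α * TensorAlgebra.ι ℂ β * TensorAlgebra.ι ℂ γ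
          - TensorAlgebra.ι ℂ γ * TensorAlgebra.ι ℂ β * TensorAlgebra.ι ℂ α) ∨
    (∃ θ : V, a = TensorAlgebra.ι ℂ θ * TensorAlgebra.ι ℂ θ * TensorAlgebra.ι ℂ θ)) ∧
  b = 0

/-- Abstract combinatorial core: in any ring `R` which is also a `ℂ`-module, if five
elements `P 0, …, P 4` satisfy the reversal relations `x*y*z = z*y*x` and the cyclic
relations `x*y*z + y*z*x + z*x*y = 0`, then their product vanishes. -/
theorem parafermionic_aux {R : Type*} [Ring R] [Module ℂ R] (P : Fin 5 → R)
    (hrev : ∀ i j k : Fin 5, P i * P j * P k = P k * P j * P i)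
    (hcyc : ∀ i j k : Fin 5, P i * P j * P k + P j * P k * P i + P k * P i * P j = 0) :
    P 0 * P 1 * P 2 * P 3 * P 4 = 0 := by
  have s1 : ∀ i j k l m : Fin 5,
      P i * P j * P k * P l * P m = P k * P j * P i * P l * P m := by
    intro i j k l m; rw [hrev i j k]
  have s2 : ∀ i j k l m : Fin 5,
      P i * P j * P k * P l * P m = P i * P l * P k * P j * P m := by
    intro i j k l m
    rw [show P i * P j * P k * P l * P m = P i * (P j * P k * P l) * P m from by
          simp only [mul_assoc], hrev j k l,
        show P i * (P l * P k * P j) * P m = P i * P l * P k * P j * P m from by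
          simp only [mul_assoc]]
  have s3 : ∀ i j k l m : Fin 5,
      P i * P j * P k * P l * P m = P i * P j * P m * P l * P k := by
    intro i j k l m
    rw [show P i * P j * P k * P l * P m = P i * P j * (P k * P l * P m) from by
          simp only [mul_assoc], hrev k l m,
        show P i * P j * (P m * P l * P k) = P i * P j * P m * P l * P k from by
          simp only [mul_assoc]]
  have hcyc5 : ∀ p i j k q : Fin 5,
      P p * P i * P j * P k * P q + P p * P j * P k * P i * P q
        + P p * P k * P i * P j * P q = 0 := by
    intro p i j k q
    calc P p * P i * P j * P k * P q + P p * P j * P k * P i * P q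
          + P p * P k * P i * P j * P q
        = P p * (P i * P j * P k + P j * P k * P i + P k * P i * P j) * P q := by
          simp only [mul_add, add_mul, mul_assoc]
      _ = 0 := by rw [hcyc i j k, mul_zero, zero_mul]
  have eq_acdeb : P 0 * P 2 * P 3 * P 4 * P 1 = P 0 * P 2 * P 1 * P 4 * P 3 := by rw [s3 0 2 3 4 1]
  have eq_adecb : P 0 * P 3 * P 4 * P 2 * P 1 = P 0 * P 2 * P 1 * P 3 * P 4 := by rw [s2 0 3 4 2 1, s3 0 2 4 3 1]
  have eq_aecdb : P 0 * P 4 * P 2 * P 3 * P 1 = P 0 * P 3 * P 1 * P 4 * P 2 := by rw [s2 0 4 2 3 1, s3 0 3 2 4 1]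
  have e_ab : P 0 * P 2 * P 1 * P 4 * P 3 + P 0 * P 2 * P 1 * P 3 * P 4 + P 0 * P 3 * P 1 * P 4 * P 2 = 0 := by
    have h := hcyc5 0 2 3 4 1; rw [eq_acdeb, eq_adecb, eq_aecdb] at h
    exact h
  have eq_abdec : P 0 * P 1 * P 3 * P 4 * P 2 = P 0 * P 1 * P 2 * P 4 * P 3 := by rw [s3 0 1 3 4 2]
  have eq_adebc : P 0 * P 3 * P 4 * P 1 * P 2 = P 0 * P 1 * P 2 * P 3 * P 4 := by rw [s2 0 3 4 1 2, s3 0 1 4 3 2]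
  have eq_aebdc : P 0 * P 4 * P 1 * P 3 * P 2 = P 0 * P 3 * P 1 * P 4 * P 2 := by rw [s2 0 4 1 3 2]
  have e_ac : P 0 * P 1 * P 2 * P 4 * P 3 + P 0 * P 1 * P 2 * P 3 * P 4 + P 0 * P 3 * P 1 * P 4 * P 2 = 0 := by
    have h := hcyc5 0 1 3 4 2; rw [eq_abdec, eq_adebc, eq_aebdc] at h
    exact h
  have eq_acebd : P 0 * P 2 * P 4 * P 1 * P 3 = P 0 * P 1 * P 3 * P 2 * P 4 := by rw [s2 0 2 4 1 3, s3 0 1 4 2 3]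
  have eq_aebcd : P 0 * P 4 * P 1 * P 2 * P 3 = P 0 * P 2 * P 1 * P 4 * P 3 := by rw [s2 0 4 1 2 3]
  have e_ad : P 0 * P 1 * P 2 * P 4 * P 3 + P 0 * P 1 * P 3 * P 2 * P 4 + P 0 * P 2 * P 1 * P 4 * P 3 = 0 := by
    have h := hcyc5 0 1 2 4 3; rw [eq_acebd, eq_aebcd] at h
    exact h
  have eq_acdbe : P 0 * P 2 * P 3 * P 1 * P 4 = P 0 * P 1 * P 3 * P 2 * P 4 := by rw [s2 0 2 3 1 4]
  have eq_adbce : P 0 * P 3 * P 1 * P 2 * P 4 = P 0 * P 2 * P 1 * P 3 * P 4 := by rw [s2 0 3 1 2 4]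
  have e_ae : P 0 * P 1 * P 2 * P 3 * P 4 + P 0 * P 1 * P 3 * P 2 * P 4 + P 0 * P 2 * P 1 * P 3 * P 4 = 0 := by
    have h := hcyc5 0 1 2 3 4; rw [eq_acdbe, eq_adbce] at h
    exact h
  have eq_badec : P 1 * P 0 * P 3 * P 4 * P 2 = P 1 * P 0 * P 2 * P 4 * P 3 := by rw [s3 1 0 3 4 2]
  have eq_bdeac : P 1 * P 3 * P 4 * P 0 * P 2 = P 1 * P 0 * P 2 * P 3 * P 4 := by rw [s2 1 3 4 0 2, s3 1 0 4 3 2]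
  have eq_beadc : P 1 * P 4 * P 0 * P 3 * P 2 = P 0 * P 3 * P 1 * P 4 * P 2 := by rw [s1 1 4 0 3 2, s2 0 4 1 3 2]
  have e_bc : P 1 * P 0 * P 2 * P 4 * P 3 + P 1 * P 0 * P 2 * P 3 * P 4 + P 0 * P 3 * P 1 * P 4 * P 2 = 0 := by
    have h := hcyc5 1 0 3 4 2; rw [eq_badec, eq_bdeac, eq_beadc] at h
    exact h
  have eq_bcead : P 1 * P 2 * P 4 * P 0 * P 3 = P 1 * P 0 * P 3 * P 2 * P 4 := by rw [s2 1 2 4 0 3, s3 1 0 4 2 3]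
  have eq_beacd : P 1 * P 4 * P 0 * P 2 * P 3 = P 0 * P 2 * P 1 * P 4 * P 3 := by rw [s1 1 4 0 2 3, s2 0 4 1 2 3]
  have e_bd : P 1 * P 0 * P 2 * P 4 * P 3 + P 1 * P 0 * P 3 * P 2 * P 4 + P 0 * P 2 * P 1 * P 4 * P 3 = 0 := by
    have h := hcyc5 1 0 2 4 3; rw [eq_bcead, eq_beacd] at h
    exact h
  have eq_bcdae : P 1 * P 2 * P 3 * P 0 * P 4 = P 1 * P 0 * P 3 * P 2 * P 4 := by rw [s2 1 2 3 0 4]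
  have eq_bdace : P 1 * P 3 * P 0 * P 2 * P 4 = P 0 * P 2 * P 1 * P 3 * P 4 := by rw [s1 1 3 0 2 4, s2 0 3 1 2 4]
  have e_be : P 1 * P 0 * P 2 * P 3 * P 4 + P 1 * P 0 * P 3 * P 2 * P 4 + P 0 * P 2 * P 1 * P 3 * P 4 = 0 := by
    have h := hcyc5 1 0 2 3 4; rw [eq_bcdae, eq_bdace] at h
    exact h
  have eq_cabed : P 2 * P 0 * P 1 * P 4 * P 3 = P 1 * P 0 * P 2 * P 4 * P 3 := by rw [s1 2 0 1 4 3]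
  have eq_cbead : P 2 * P 1 * P 4 * P 0 * P 3 = P 2 * P 0 * P 3 * P 1 * P 4 := by rw [s2 2 1 4 0 3, s3 2 0 4 1 3]
  have eq_ceabd : P 2 * P 4 * P 0 * P 1 * P 3 = P 0 * P 1 * P 2 * P 4 * P 3 := by rw [s1 2 4 0 1 3, s2 0 4 2 1 3]
  have e_cd : P 1 * P 0 * P 2 * P 4 * P 3 + P 2 * P 0 * P 3 * P 1 * P 4 + P 0 * P 1 * P 2 * P 4 * P 3 = 0 := by
    have h := hcyc5 2 0 1 4 3; rw [eq_cabed, eq_cbead, eq_ceabd] at h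
    exact h
  have eq_cabde : P 2 * P 0 * P 1 * P 3 * P 4 = P 1 * P 0 * P 2 * P 3 * P 4 := by rw [s1 2 0 1 3 4]
  have eq_cbdae : P 2 * P 1 * P 3 * P 0 * P 4 = P 2 * P 0 * P 3 * P 1 * P 4 := by rw [s2 2 1 3 0 4]
  have eq_cdabe : P 2 * P 3 * P 0 * P 1 * P 4 = P 0 * P 1 * P 2 * P 3 * P 4 := by rw [s1 2 3 0 1 4, s2 0 3 2 1 4]
  have e_ce : P 1 * P 0 * P 2 * P 3 * P 4 + P 2 * P 0 * P 3 * P 1 * P 4 + P 0 * P 1 * P 2 * P 3 * P 4 = 0 := by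
    have h := hcyc5 2 0 1 3 4; rw [eq_cabde, eq_cbdae, eq_cdabe] at h
    exact h
  have eq_dabce : P 3 * P 0 * P 1 * P 2 * P 4 = P 1 * P 0 * P 3 * P 2 * P 4 := by rw [s1 3 0 1 2 4]
  have eq_dbcae : P 3 * P 1 * P 2 * P 0 * P 4 = P 2 * P 0 * P 3 * P 1 * P 4 := by rw [s1 3 1 2 0 4, s2 2 1 3 0 4]
  have eq_dcabe : P 3 * P 2 * P 0 * P 1 * P 4 = P 0 * P 1 * P 3 * P 2 * P 4 := by rw [s1 3 2 0 1 4, s2 0 2 3 1 4]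
  have e_de : P 1 * P 0 * P 3 * P 2 * P 4 + P 2 * P 0 * P 3 * P 1 * P 4 + P 0 * P 1 * P 3 * P 2 * P 4 = 0 := by
    have h := hcyc5 3 0 1 2 4; rw [eq_dabce, eq_dbcae, eq_dcabe] at h
    exact h
  have key : P 0 * P 1 * P 2 * P 3 * P 4 + P 0 * P 1 * P 2 * P 3 * P 4 + P 0 * P 1 * P 2 * P 3 * P 4 + P 0 * P 1 * P 2 * P 3 * P 4 + P 0 * P 1 * P 2 * P 3 * P 4 + P 0 * P 1 * P 2 * P 3 * P 4 =
      (((P 0 * P 1 * P 2 * P 4 * P 3 + P 0 * P 1 * P 2 * P 3 * P 4 + P 0 * P 3 * P 1 * P 4 * P 2) + (P 0 * P 1 * P 2 * P 3 * P 4 + P 0 * P 1 * P 3 * P 2 * P 4 + P 0 * P 2 * P 1 * P 3 * P 4) + (P 1 * P 0 * P 2 * P 4 * P 3 + P 1 * P 0 * P 3 * P 2 * P 4 + P 0 * P 2 * P 1 * P 4 * P 3) + (P 1 * P 0 * P 2 * P 3 * P 4 + P 2 * P 0 * P 3 * P 1 * P 4 + P 0 * P 1 * P 2 * P 3 * P 4))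 + ((P 0 * P 1 * P 2 * P 4 * P 3 + P 0 * P 1 * P 2 * P 3 * P 4 + P 0 * P 3 * P 1 * P 4 * P 2) + (P 0 * P 1 * P 2 * P 3 * P 4 + P 0 * P 1 * P 3 * P 2 * P 4 + P 0 * P 2 * P 1 * P 3 * P 4) + (P 1 * P 0 * P 2 * P 4 * P 3 + P 1 * P 0 * P 3 * P 2 * P 4 + P 0 * P 2 * P 1 * P 4 * P 3) + (P 1 * P 0 * P 2 * P 3 * P 4 + P 2 * P 0 * P 3 * P 1 * P 4 + P 0 * P 1 * P 2 * P 3 * P 4))) - ((P 0 * P 2 * P 1 * P 4 * P 3 + P 0 * P 2 * P 1 * P 3 * P 4 + P 0 * P 3 * P 1 * P 4 * P 2) + (P 0 * P 1 * P 2 * P 4 * P 3 + P 0 * P 1 * P 3 * P 2 * P 4 + P 0 * P 2 * P 1 * P 4 * P 3) + (P 1 * P 0 * P 2 * P 4 * P 3 + P 1 * P 0 * P 2 * P 3 * P 4 + P 0 * P 3 * P 1 * P 4 * P 2) + (P 1 * P 0 * P 2 * P 3 * P 4 + P 1 * P 0 * P 3 * P 2 * P 4 + P 0 * P 2 * P 1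 * P 3 * P 4) + (P 1 * P 0 * P 2 * P 4 * P 3 + P 2 * P 0 * P 3 * P 1 * P 4 + P 0 * P 1 * P 2 * P 4 * P 3) + (P 1 * P 0 * P 3 * P 2 * P 4 + P 2 * P 0 * P 3 * P 1 * P 4 + P 0 * P 1 * P 3 * P 2 * P 4)) := by abel
  rw [e_ab, e_ac, e_ad, e_ae, e_bc, e_bd, e_be, e_cd, e_ce, e_de] at key
  simp only [add_zero, zero_add, sub_zero, sub_self] at key
  have h6 : (6 : ℂ) • (P 0 * P 1 * P 2 * P 3 * P 4) = 0 := by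
    rw [show (6 : ℂ) • (P 0 * P 1 * P 2 * P 3 * P 4)
        = P 0 * P 1 * P 2 * P 3 * P 4 + P 0 * P 1 * P 2 * P 3 * P 4
          + P 0 * P 1 * P 2 * P 3 * P 4 + P 0 * P 1 * P 2 * P 3 * P 4
          + P 0 * P 1 * P 2 * P 3 * P 4 + P 0 * P 1 * P 2 * P 3 * P 4 from by module, key]
  have h7 : P 0 * P 1 * P 2 * P 3 * P 4
      = (6 : ℂ)⁻¹ • ((6 : ℂ) • (P 0 * P 1 * P 2 * P 3 * P 4)) := by
    rw [smul_smul]; norm_num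
  rw [h7, h6, smul_zero]

/-- In the quotient `A = T(V)/(αβγ - γβα, θ³)` — the dual cubic algebra `B^!` of the
parafermionic algebra — the product of any five elements of `V` vanishes. -/
theorem parafermionicDual_degree_five_products_vanish
    (V : Type*) [AddCommGroup V] [Module ℂ V] [FiniteDimensional ℂ V]
    (α₁ α₂ α₃ α₄ α₅ : V) :
    RingQuot.mkAlgHom ℂ (parafermionicDualRel V)
      (TensorAlgebra.ι ℂ α₁ * TensorAlgebra.ι ℂ α₂ * TensorAlgebra.ι ℂ α₃ *
        TensorAlgebra.ι ℂ α₄ * TensorAlgebra.ι ℂ α₅) = 0 := by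
  set π := RingQuot.mkAlgHom ℂ (parafermionicDualRel V) with hπ
  set Q : V → RingQuot (parafermionicDualRel V) := fun v => π (TensorAlgebra.ι ℂ v) with hQ
  have hrevV : ∀ x y z : V, Q x * Q y * Q z = Q z * Q y * Q x := by
    intro x y z
    have h : parafermionicDualRel V
        (TensorAlgebra.ι ℂ x * TensorAlgebra.ι ℂ y * TensorAlgebra.ι ℂ z
          - TensorAlgebra.ι ℂ z * TensorAlgebra.ι ℂ y * TensorAlgebra.ι ℂ x) 0 :=
      ⟨Or.inl ⟨x, y, z, rfl⟩, rfl⟩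
    have h2 := RingQuot.mkAlgHom_rel ℂ h
    rw [map_sub, map_zero, sub_eq_zero, map_mul, map_mul, map_mul, map_mul] at h2
    exact h2
  have hcubeV : ∀ θ : V, Q θ * Q θ * Q θ = 0 := by
    intro θ
    have h : parafermionicDualRel V
        (TensorAlgebra.ι ℂ θ * TensorAlgebra.ι ℂ θ * TensorAlgebra.ι ℂ θ) 0 :=
      ⟨Or.inr ⟨θ, rfl⟩, rfl⟩
    have h2 := RingQuot.mkAlgHom_rel ℂ h
    rw [map_zero, map_mul, map_mul] at h2
    exact h2
  have hQadd : ∀ x y : V, Q (x + y) = Q x + Q y := by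
    intro x y; simp only [hQ, map_add]
  have hsymV : ∀ x y z : V,
      Q x * Q y * Q z + Q y * Q z * Q x + Q z * Q x * Q y
        + Q z * Q y * Q x + Q x * Q z * Q y + Q y * Q x * Q z = 0 := by
    intro x y z
    have h1 := hcubeV (x + y + z)
    have h2 := hcubeV (x + y)
    have h3 := hcubeV (x + z)
    have h4 := hcubeV (y + z)
    rw [hQadd, hQadd] at h1
    rw [hQadd] at h2 h3 h4
    calc Q x * Q y * Q z + Q y * Q z * Q x + Q z * Q x * Q y
          + Q z * Q y * Q x + Q x * Q z * Q y + Q y * Q x * Q z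
        = (Q x + Q y + Q z) * (Q x + Q y + Q z) * (Q x + Q y + Q z)
          - (Q x + Q y) * (Q x + Q y) * (Q x + Q y)
          - (Q x + Q z) * (Q x + Q z) * (Q x + Q z)
          - (Q y + Q z) * (Q y + Q z) * (Q y + Q z)
          + Q x * Q x * Q x + Q y * Q y * Q y + Q z * Q z * Q z := by noncomm_ring
      _ = 0 := by
          rw [h1, h2, h3, h4, hcubeV x, hcubeV y, hcubeV z]; norm_num
  have hcycV : ∀ x y z : V, Q x * Q y * Q z + Q y * Q z * Q x + Q z * Q x * Q y = 0 := by
    intro x y z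
    have h := hsymV x y z
    rw [← hrevV x y z, ← hrevV y z x, ← hrevV z x y] at h
    have h2 : (2 : ℂ) • (Q x * Q y * Q z + Q y * Q z * Q x + Q z * Q x * Q y) = 0 := by
      rw [show (2 : ℂ) • (Q x * Q y * Q z + Q y * Q z * Q x + Q z * Q x * Q y)
          = Q x * Q y * Q z + Q y * Q z * Q x + Q z * Q x * Q y
            + Q x * Q y * Q z + Q y * Q z * Q x + Q z * Q x * Q y from by module, h]
    have h3 : Q x * Q y * Q z + Q y * Q z * Q x + Q z * Q x * Q y
        = (2 : ℂ)⁻¹ • ((2 : ℂ) • (Q x * Q y * Q z + Q y * Q z * Q x + Q z * Q x * Q y)) := by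
      rw [smul_smul]; norm_num
    rw [h3, h2, smul_zero]
  have main := parafermionic_aux (fun i => Q (![α₁, α₂, α₃, α₄, α₅] i))
    (fun i j k => hrevV _ _ _) (fun i j k => hcycV _ _ _)
  simp only [Matrix.cons_val_zero, Matrix.cons_val_one, Matrix.head_cons,
    Matrix.cons_val_two, Matrix.tail_cons, Matrix.cons_val_three,
    Matrix.cons_val_four] at main
  simpa only [map_mul] using main
end

section
/- Let D ≥ 1 be an integer, V = ℂ^D with basis θ^1, …, θ^D, and let A be the quotient of the tensor algebra T(V) by the two-sided ideal generated by the elements θ^j⊗θ^k⊗θ^i + θ^j⊗θ^i⊗θ^k for i < j ≤ k, θ^i⊗θ^k⊗θ^j + θ^k⊗θ^i⊗θ^j for i ≤ j < k, θ^i⊗θ^j⊗θ^k for i ≤ j ≤ k, and θ^k⊗θ^j⊗θ^i for i < j < k (indices in {1,…,D}). Then the product (in A) of any five elements of V is zero: for all v₁, …, v₅ ∈ V, the image of v₁⊗v₂⊗v₃⊗v₄⊗v₅ in A vanishes. -/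
/-- The canonical basis vector `θ^k` of `V = ℂ^D`. -/
noncomputable def theta (D : ℕ) (k : Fin D) : Fin D → ℂ := Pi.single k 1

/-- The relation identifying with `0` the generators of the two-sided ideal of `T(V)`,
`V = ℂ^D`, generated by `θ^j⊗θ^k⊗θ^i + θ^j⊗θ^i⊗θ^k` for `i < j ≤ k`,
`θ^i⊗θ^k⊗θ^j + θ^k⊗θ^i⊗θ^j` for `i ≤ j < k`, `θ^i⊗θ^j⊗θ^k` for `i ≤ j ≤ k`, and
`θ^k⊗θ^j⊗θ^i` for `i < j < k`; the corresponding `RingQuot` is the quotient of `T(V)` by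
that two-sided ideal: it is the dual cubic algebra `P^!` of the plactic algebra. -/
noncomputable def placticDualRel (D : ℕ) (a b : TensorAlgebra ℂ (Fin D → ℂ)) : Prop :=
  ((∃ i j k : Fin D, i < j ∧ j ≤ k ∧
      a = TensorAlgebra.ι ℂ (theta D j) * TensorAlgebra.ι ℂ (theta D k) *
            TensorAlgebra.ι ℂ (theta D i)
          + TensorAlgebra.ι ℂ (theta D j) * TensorAlgebra.ι ℂ (theta D i) *
            TensorAlgebra.ι ℂ (theta D k)) ∨
    (∃ i j k : Fin D, i ≤ j ∧ j < k ∧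
      a = TensorAlgebra.ι ℂ (theta D i) * TensorAlgebra.ι ℂ (theta D k) *
            TensorAlgebra.ι ℂ (theta D j)
          + TensorAlgebra.ι ℂ (theta D k) * TensorAlgebra.ι ℂ (theta D i) *
            TensorAlgebra.ι ℂ (theta D j)) ∨
    (∃ i j k : Fin D, i ≤ j ∧ j ≤ k ∧
      a = TensorAlgebra.ι ℂ (theta D i) * TensorAlgebra.ι ℂ (theta D j) *
            TensorAlgebra.ι ℂ (theta D k)) ∨
    (∃ i j k : Fin D, i < j ∧ j < k ∧
      a = TensorAlgebra.ι ℂ (theta D k) * TensorAlgebra.ι ℂ (theta D j) *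
            TensorAlgebra.ι ℂ (theta D i))) ∧
  b = 0

namespace PlacticAux

noncomputable def K (D : ℕ) (k : Fin D) : RingQuot (placticDualRel D) :=
  RingQuot.mkAlgHom ℂ (placticDualRel D) (TensorAlgebra.ι ℂ (theta D k))

lemma Z1 {D : ℕ} {i j k : Fin D} (h1 : i ≤ j) (h2 : j ≤ k) :
    K D i * K D j * K D k = 0 := by
  have h : placticDualRel D (TensorAlgebra.ι ℂ (theta D i) * TensorAlgebra.ι ℂ (theta D j) *
      TensorAlgebra.ι ℂ (theta D k)) 0 :=
    ⟨Or.inr (Or.inr (Or.inl ⟨i, j, k, h1, h2, rfl⟩)), rfl⟩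
  have := RingQuot.mkAlgHom_rel ℂ h
  simpa [K, map_mul] using this

lemma Z2 {D : ℕ} {i j k : Fin D} (h1 : i < j) (h2 : j < k) :
    K D k * K D j * K D i = 0 := by
  have h : placticDualRel D (TensorAlgebra.ι ℂ (theta D k) * TensorAlgebra.ι ℂ (theta D j) *
      TensorAlgebra.ι ℂ (theta D i)) 0 :=
    ⟨Or.inr (Or.inr (Or.inr ⟨i, j, k, h1, h2, rfl⟩)), rfl⟩
  have := RingQuot.mkAlgHom_rel ℂ h
  simpa [K, map_mul] using this

lemma L1 {D : ℕ} {i j k : Fin D} (h1 : i < j) (h2 : j ≤ k) :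
    K D j * K D k * K D i + K D j * K D i * K D k = 0 := by
  have h : placticDualRel D (TensorAlgebra.ι ℂ (theta D j) * TensorAlgebra.ι ℂ (theta D k) *
        TensorAlgebra.ι ℂ (theta D i)
      + TensorAlgebra.ι ℂ (theta D j) * TensorAlgebra.ι ℂ (theta D i) *
        TensorAlgebra.ι ℂ (theta D k)) 0 :=
    ⟨Or.inl ⟨i, j, k, h1, h2, rfl⟩, rfl⟩
  have h' := RingQuot.mkAlgHom_rel ℂ h
  simpa [K, map_add, map_mul] using h'

lemma L2 {D : ℕ} {i j k : Fin D} (h1 : i ≤ j) (h2 : j < k) :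
    K D i * K D k * K D j + K D k * K D i * K D j = 0 := by
  have h : placticDualRel D (TensorAlgebra.ι ℂ (theta D i) * TensorAlgebra.ι ℂ (theta D k) *
        TensorAlgebra.ι ℂ (theta D j)
      + TensorAlgebra.ι ℂ (theta D k) * TensorAlgebra.ι ℂ (theta D i) *
        TensorAlgebra.ι ℂ (theta D j)) 0 :=
    ⟨Or.inr (Or.inl ⟨i, j, k, h1, h2, rfl⟩), rfl⟩
  have h' := RingQuot.mkAlgHom_rel ℂ h
  simpa [K, map_add, map_mul] using h'

lemma M_zero (D : ℕ) (a b c d e : Fin D) :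
    K D a * K D b * K D c * K D d * K D e = 0 := by
  rcases le_or_gt a b with h1 | h1 <;> rcases le_or_gt b c with h2 | h2 <;>
    rcases le_or_gt c d with h3 | h3 <;> rcases le_or_gt d e with h4 | h4
  all_goals try { rw [Z1 h1 h2, zero_mul, zero_mul] }
  all_goals try { rw [show K D a * K D b * K D c * K D d * K D e
      = K D a * (K D b * K D c * K D d) * K D e from by noncomm_ring, Z1 h2 h3, mul_zero, zero_mul] }
  all_goals try { rw [show K D a * K D b * K D c * K D d * K D e
      = K D a * K D b * (K D c * K D d * K D e) from by noncomm_ring, Z1 h3 h4, mul_zero] }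
  all_goals try { rw [Z2 h2 h1, zero_mul, zero_mul] }
  all_goals try { rw [show K D a * K D b * K D c * K D d * K D e
      = K D a * (K D b * K D c * K D d) * K D e from by noncomm_ring, Z2 h3 h2, mul_zero, zero_mul] }
  all_goals try { rw [show K D a * K D b * K D c * K D d * K D e
      = K D a * K D b * (K D c * K D d * K D e) from by noncomm_ring, Z2 h4 h3, mul_zero] }
  -- Case A : a ≤ b, c < b, c ≤ d, e < d
  · rcases le_or_gt a c with h5 | h5
    · -- a ≤ c < b, rewrite first triple; then a ≤ c ≤ d kills
      have h0 : K D a * K D b * K D c * K D d * K D e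
          + K D b * K D a * K D c * K D d * K D e = 0 := by
        rw [← add_mul, ← add_mul, L2 h5 h2, zero_mul, zero_mul]
      have h1 : K D b * K D a * K D c * K D d * K D e = 0 := by
        rw [show K D b * K D a * K D c * K D d * K D e
            = K D b * (K D a * K D c * K D d) * K D e from by noncomm_ring,
          Z1 h5 h3, mul_zero, zero_mul]
      rw [h1, add_zero] at h0
      exact h0
    · -- c < a ≤ b, rewrite first triple
      have h0 : K D a * K D b * K D c * K D d * K D e
          + K D a * K D c * K D b * K D d * K D e = 0 := by
        rw [← add_mul, ← add_mul, L1 h5 h1, zero_mul, zero_mul]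
      have h1 : K D a * K D c * K D b * K D d * K D e = 0 := by
        rcases le_or_gt b d with h6 | h6
        · rw [show K D a * K D c * K D b * K D d * K D e
              = K D a * (K D c * K D b * K D d) * K D e from by noncomm_ring,
            Z1 (h5.le.trans h1) h6, mul_zero, zero_mul]
        · rw [show K D a * K D c * K D b * K D d * K D e
              = K D a * K D c * (K D b * K D d * K D e) from by noncomm_ring,
            Z2 h4 h6, mul_zero]
      rw [h1, add_zero] at h0
      exact h0
  -- Case B : b < a, b ≤ c, d < c, d ≤ e : rewrite middle triple
  · rw [show K D a * K D b * K D c * K D d * K D e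
        = K D a * (K D b * K D c * K D d) * K D e from by noncomm_ring]
    rcases le_or_gt b d with h5 | h5
    · have h0 : K D a * (K D b * K D c * K D d) * K D e
          + K D a * (K D c * K D b * K D d) * K D e = 0 := by
        rw [← add_mul, ← mul_add, L2 h5 h3, mul_zero, zero_mul]
      have h1 : K D a * (K D c * K D b * K D d) * K D e = 0 := by
        rw [show K D a * (K D c * K D b * K D d) * K D e
            = K D a * K D c * (K D b * K D d * K D e) from by noncomm_ring,
          Z1 h5 h4, mul_zero]
      rw [h1, add_zero] at h0
      exact h0
    · have h0 : K D a * (K D b * K D c * K D d) * K D e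
          + K D a * (K D b * K D d * K D c) * K D e = 0 := by
        rw [← add_mul, ← mul_add, L1 h5 h2, mul_zero, zero_mul]
      have h1 : K D a * (K D b * K D d * K D c) * K D e = 0 := by
        rw [show K D a * (K D b * K D d * K D c) * K D e
            = K D a * K D b * K D d * (K D c * K D e) from by noncomm_ring,
          Z2 h5 h1, zero_mul]
      rw [h1, add_zero] at h0
      exact h0

lemma expand (D : ℕ) (v : Fin D → ℂ) :
    RingQuot.mkAlgHom ℂ (placticDualRel D) (TensorAlgebra.ι ℂ v) = ∑ k, v k • K D k := by
  have hv : v = ∑ k, v k • theta D k := by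
    ext j
    simp [theta, Pi.single_apply]
  conv_lhs => rw [hv]
  simp [K]

end PlacticAux

/-- In the quotient `A = T(ℂ^D)/(Knuth relation annihilator)` — the dual cubic algebra `P^!`
of the plactic algebra — the product of any five elements of `V = ℂ^D` vanishes. -/
theorem placticDual_degree_five_products_vanish (D : ℕ) (hD : 1 ≤ D)
    (v₁ v₂ v₃ v₄ v₅ : Fin D → ℂ) :
    RingQuot.mkAlgHom ℂ (placticDualRel D)
      (TensorAlgebra.ι ℂ v₁ * TensorAlgebra.ι ℂ v₂ * TensorAlgebra.ι ℂ v₃ *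
        TensorAlgebra.ι ℂ v₄ * TensorAlgebra.ι ℂ v₅) = 0 := by
  simp only [map_mul, PlacticAux.expand]
  simp only [Finset.sum_mul, Finset.mul_sum, smul_mul_assoc, mul_smul_comm]
  simp [PlacticAux.M_zero]
end

section
/- For every integer D ≥ 1, the identity ∑_{n≥0} c_n(D) t^n = (1−t)^{−D} · (1−t²)^{−D(D−1)/2} holds in the formal power series ring ℚ[[t]], where c_n(D) is the number of pairs (λ, T) with λ a Young diagram with n cells and T a semistandard Young tableau of shape λ with entries in {0, 1, …, D−1}. -/
/-!
Let `N_E(μ)` be the number of tableaux of shape `μ` with entries `< E`. Deleting the largest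
letter `E` leaves a tableau on a shape `τ` with `μ / τ` a horizontal strip, so
`N_{E+1}(μ) = ∑_{μ / τ strip} N_E(τ)`. The combinatorial heart is a bijection, computed row by row
on row lengths, between the diagrams `μ` lying over both `ν` and `ρ` by horizontal strips with
`|μ| = n`, and the diagrams `σ` lying under both by horizontal strips with
`|ν| + |ρ| ≤ |σ| + n`. Exchanging sums along it yields, by induction on `E`, the Pieri rule
`∑_{τ / σ strip, |τ / σ| ≤ K} N_E(τ) = N_E(σ) · multichoose (E + 1) K`, and then
`c_n(E + 1) = ∑_j c_j(E) · multichoose (E + 1) ⌊(n - j) / 2⌋`. For generating functions this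
reads `F_{E+1} = F_E · (1 - t)⁻¹ (1 - t²)⁻ᴱ`.
-/

open PowerSeries

/-- `ssytPairCount D n` is the number of pairs `(λ, T)` where `λ` is a Young diagram with `n`
cells and `T` is a semistandard Young tableau of shape `λ` with entries in `{0, 1, …, D-1}`. -/
noncomputable def ssytPairCount (D n : ℕ) : ℕ :=
  Nat.card {p : Σ μ : YoungDiagram, SemistandardYoungTableau μ //
    p.1.card = n ∧ ∀ i j : ℕ, (i, j) ∈ p.1 → p.2 i j < D}

open Finset
open scoped Classical

theorem Finset.sum_sum_filter_comm {α β M : Type*} [AddCommMonoid M] (s : Finset α)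
    (t : Finset β) (R : α → β → Prop) [∀ a b, Decidable (R a b)] (f : β → M) :
    ∑ a ∈ s, ∑ b ∈ t with R a b, f b = ∑ b ∈ t, #{a ∈ s | R a b} • f b := by
  rw [sum_comm' (t' := t) (s' := fun b => {a ∈ s | R a b}) fun a b => by
    simp only [mem_filter]; tauto]
  simp only [sum_const]

theorem Nat.sum_range_multichoose_eq_multichoose_succ (n k : ℕ) :
    ∑ i ∈ range (n + 1), k.multichoose i = (k + 1).multichoose n := by
  rw [Nat.sum_range_multichoose, Nat.multichoose_eq, show k + 1 + n - 1 = n + k by omega,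
    Nat.choose_symm_add]

namespace YoungDiagram

variable {μ ν ρ σ : YoungDiagram}

theorem ext_rowLen (h : ∀ i, μ.rowLen i = ν.rowLen i) : μ = ν := by
  ext ⟨i, j⟩
  simp only [mem_cells, mem_iff_lt_rowLen, h]

theorem le_iff_rowLen_le : μ ≤ ν ↔ ∀ i, μ.rowLen i ≤ ν.rowLen i := by
  refine ⟨fun h i => ?_, fun h ⟨i, j⟩ hc => ?_⟩
  · by_contra! hlt
    exact (mem_iff_lt_rowLen.mp (h (mem_iff_lt_rowLen.mpr hlt))).false
  · exact mem_iff_lt_rowLen.mpr ((mem_iff_lt_rowLen.mp hc).trans_le (h i))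

theorem rowLen_inf (μ ν : YoungDiagram) (i : ℕ) :
    (μ ⊓ ν).rowLen i = min (μ.rowLen i) (ν.rowLen i) :=
  eq_of_forall_lt_iff fun j => by simp only [← mem_iff_lt_rowLen, mem_inf, lt_min_iff]

theorem rowLen_sup (μ ν : YoungDiagram) (i : ℕ) :
    (μ ⊔ ν).rowLen i = max (μ.rowLen i) (ν.rowLen i) :=
  eq_of_forall_lt_iff fun j => by simp only [← mem_iff_lt_rowLen, mem_sup, lt_max_iff]

theorem rowLen_inf_le_sup (μ ν : YoungDiagram) (i : ℕ) :
    (μ ⊓ ν).rowLen i ≤ (μ ⊔ ν).rowLen i :=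
  le_iff_rowLen_le.mp inf_le_sup i

@[simp]
theorem card_bot : (⊥ : YoungDiagram).card = 0 := by
  rw [YoungDiagram.card, cells_bot, Finset.card_empty]

theorem card_mono (h : μ ≤ ν) : μ.card ≤ ν.card :=
  card_le_card (cells_subset_iff.mpr h)

theorem card_inf_add_card_sup (μ ν : YoungDiagram) :
    (μ ⊓ ν).card + (μ ⊔ ν).card = μ.card + ν.card := by
  rw [YoungDiagram.card, YoungDiagram.card, cells_inf, cells_sup, add_comm,
    card_union_add_card_inter]

theorem row_lt_card {i j : ℕ} (h : (i, j) ∈ μ) : i < μ.card := by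
  have hcol : μ.colLen j ≤ μ.card := by
    rw [colLen_eq_card]
    exact card_le_card (filter_subset _ _)
  exact (mem_iff_lt_colLen.mp h).trans_le hcol

theorem rowLen_le_card (μ : YoungDiagram) (i : ℕ) : μ.rowLen i ≤ μ.card := by
  rw [rowLen_eq_card]
  exact card_le_card (filter_subset _ _)

theorem rowLen_eq_zero_of_card_le {i : ℕ} (h : μ.card ≤ i) : μ.rowLen i = 0 := by
  by_contra h0
  exact (row_lt_card (mem_iff_lt_rowLen.mpr (Nat.pos_of_ne_zero h0))).not_ge h

theorem card_eq_sum_rowLen {N : ℕ} (hN : μ.card ≤ N) : μ.card = ∑ i ∈ range N, μ.rowLen i := by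
  have hcells : μ.cells = (range N).biUnion μ.row := by
    ext ⟨i, j⟩
    simp only [mem_biUnion, mem_range, mem_row_iff, mem_cells]
    exact ⟨fun h => ⟨i, (row_lt_card h).trans_le hN, h, rfl⟩, fun ⟨_, _, h, _⟩ => h⟩
  rw [YoungDiagram.card, hcells, card_biUnion]
  · simp only [rowLen_eq_card]
  · intro x _ y _ hxy
    exact disjoint_left.mpr fun c hx hy =>
      hxy ((mem_row_iff.mp hx).2.symm.trans (mem_row_iff.mp hy).2)

theorem card_add_card_add_rowLen_zero {α β γ δ : YoungDiagram}
    (h : ∀ i, α.rowLen i + β.rowLen (i + 1) = γ.rowLen i + δ.rowLen (i + 1)) :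
    α.card + β.card + δ.rowLen 0 = γ.card + δ.card + β.rowLen 0 := by
  set N := α.card + β.card + γ.card + δ.card
  have hshift (κ : YoungDiagram) (hκ : κ.card ≤ N) :
      κ.card = ∑ i ∈ range N, κ.rowLen (i + 1) + κ.rowLen 0 := by
    rw [card_eq_sum_rowLen (N := N + 1) (by omega), sum_range_succ']
  have hsum := sum_congr rfl fun i (_ : i ∈ range N) => h i
  rw [sum_add_distrib, sum_add_distrib] at hsum
  rw [card_eq_sum_rowLen (μ := α) (N := N) (by omega),
    card_eq_sum_rowLen (μ := γ) (N := N) (by omega), hshift β (by omega), hshift δ (by omega)]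
  omega

/-- For antitone `f` with `f N = 0` this is the diagram with row lengths `f`. The condition
`∀ k ≤ i` makes the cells a lower set for every `f`, so that the construction is a total map. -/
def ofRowLenFn (f : ℕ → ℕ) (N : ℕ) : YoungDiagram where
  cells := (range N ×ˢ range (f 0)).filter fun c => ∀ k ≤ c.1, c.2 < f k
  isLowerSet := by
    rintro ⟨i, j⟩ ⟨i', j'⟩ ⟨hi, hj⟩ h
    simp only [coe_filter, mem_product, mem_range, Set.mem_ofPred_eq] at h ⊢
    exact ⟨⟨by omega, by omega⟩, fun k hk => (h.2 k (hk.trans hi)).trans_le' hj⟩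

theorem rowLen_ofRowLenFn {f : ℕ → ℕ} {N : ℕ} (hf : Antitone f) (hN : f N = 0) (i : ℕ) :
    (ofRowLenFn f N).rowLen i = f i := by
  refine eq_of_forall_lt_iff fun j => ?_
  rw [← mem_iff_lt_rowLen, ← mem_cells]
  simp only [ofRowLenFn, mem_filter, mem_product, mem_range]
  refine ⟨fun h => h.2 i le_rfl, fun h => ⟨⟨?_, h.trans_le (hf (Nat.zero_le i))⟩,
    fun k hk => h.trans_le (hf hk)⟩⟩
  by_contra! hi
  exact Nat.not_lt_zero j (h.trans_le ((hf hi).trans_eq hN))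

theorem finite_setOf_card_le (n : ℕ) : {μ : YoungDiagram | μ.card ≤ n}.Finite := by
  refine Set.Finite.of_finite_image (f := cells) ?_ fun μ _ ν _ h => YoungDiagram.ext h
  refine ((range n ×ˢ range n).powerset.finite_toSet).subset ?_
  rintro _ ⟨μ, hμ, rfl⟩
  rw [mem_coe, mem_powerset]
  rintro ⟨i, j⟩ hc
  rw [mem_cells] at hc
  rw [Set.mem_ofPred_eq] at hμ
  simp only [mem_product, mem_range]
  exact ⟨(row_lt_card hc).trans_le hμ,
    ((mem_iff_lt_rowLen.mp hc).trans_le (rowLen_le_card μ i)).trans_le hμ⟩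

/-- Sums over Young diagrams are taken over this finite set, for a bound large enough to contain
every diagram that contributes. -/
noncomputable def withCardLE (n : ℕ) : Finset YoungDiagram := (finite_setOf_card_le n).toFinset

@[simp]
theorem mem_withCardLE {n : ℕ} : μ ∈ withCardLE n ↔ μ.card ≤ n :=
  Set.Finite.mem_toFinset _

/-- `μ / ν` is a horizontal strip (so `ν ≤ μ`): the rows interlace, `μᵢ₊₁ ≤ νᵢ ≤ μᵢ`. -/
def IsHorizontalStrip (μ ν : YoungDiagram) : Prop :=
  ∀ i, ν.rowLen i ≤ μ.rowLen i ∧ μ.rowLen (i + 1) ≤ ν.rowLen i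

theorem isHorizontalStrip_iff :
    IsHorizontalStrip μ ν ↔ ν ≤ μ ∧ ∀ i j, (i + 1, j) ∈ μ → (i, j) ∈ ν := by
  simp only [IsHorizontalStrip, forall_and, le_iff_rowLen_le, mem_iff_lt_rowLen]
  refine and_congr_right fun _ => ⟨fun h i j hj => hj.trans_le (h i), fun h i => ?_⟩
  by_contra! hlt
  exact (h i _ (Nat.sub_one_lt_of_lt hlt)).not_ge (Nat.le_sub_one_of_lt hlt)

theorem IsHorizontalStrip.le (h : IsHorizontalStrip μ ν) : ν ≤ μ :=
  (isHorizontalStrip_iff.mp h).1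

theorem IsHorizontalStrip.card_le (h : IsHorizontalStrip μ ν) : ν.card ≤ μ.card :=
  card_mono h.le

theorem isHorizontalStrip_bot_iff : IsHorizontalStrip ⊥ ν ↔ ν = ⊥ := by
  refine ⟨fun h => le_bot_iff.mp h.le, ?_⟩
  rintro rfl
  exact isHorizontalStrip_iff.mpr ⟨le_rfl, fun _ _ h => absurd h (notMem_bot _)⟩

theorem isHorizontalStrip_over_both_iff :
    IsHorizontalStrip μ ν ∧ IsHorizontalStrip μ ρ ↔
      ∀ i, (ν ⊔ ρ).rowLen i ≤ μ.rowLen i ∧ μ.rowLen (i + 1) ≤ (ν ⊓ ρ).rowLen i := by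
  simp only [IsHorizontalStrip, rowLen_inf, rowLen_sup, max_le_iff, le_min_iff, ← forall_and]
  exact forall_congr' fun _ => by tauto

theorem isHorizontalStrip_under_both_iff :
    IsHorizontalStrip ν σ ∧ IsHorizontalStrip ρ σ ↔
      ∀ i, σ.rowLen i ≤ (ν ⊓ ρ).rowLen i ∧ (ν ⊔ ρ).rowLen (i + 1) ≤ σ.rowLen i := by
  simp only [IsHorizontalStrip, rowLen_inf, rowLen_sup, max_le_iff, le_min_iff, ← forall_and]
  exact forall_congr' fun _ => by tauto

theorem sum_isHorizontalStrip_card_le {M : Type*} [AddCommMonoid M] (f : YoungDiagram → M)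
    (ν : YoungDiagram) (K N : ℕ) :
    ∑ μ ∈ withCardLE N with IsHorizontalStrip μ ν ∧ μ.card ≤ ν.card + K, f μ =
      ∑ k ∈ range (K + 1),
        ∑ μ ∈ withCardLE N with IsHorizontalStrip μ ν ∧ μ.card = ν.card + k, f μ := by
  rw [← sum_fiberwise_of_maps_to (g := fun μ => μ.card - ν.card) (t := range (K + 1))]
  · refine sum_congr rfl fun k hk => ?_
    rw [filter_filter]
    refine sum_congr (filter_congr fun μ _ => ?_) fun _ _ => rfl
    have := mem_range.mp hk
    constructor
    · rintro ⟨⟨hs, -⟩, hk⟩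
      exact ⟨hs, by have := hs.card_le; omega⟩
    · rintro ⟨hs, hk⟩
      exact ⟨⟨hs, by omega⟩, by omega⟩
  · intro μ hμ
    have := (mem_filter.mp hμ).2
    exact mem_range.mpr (by omega)

section DoubleStrip

variable (ν ρ) in
def stripDown (μ : YoungDiagram) : YoungDiagram :=
  ofRowLenFn (fun i => (ν ⊓ ρ).rowLen i - (μ.rowLen (i + 1) - (ν ⊔ ρ).rowLen (i + 1))) ν.card

variable (ν ρ) in
def stripUp (n : ℕ) (σ : YoungDiagram) : YoungDiagram :=
  ofRowLenFn (fun
    | 0 => (ν ⊔ ρ).rowLen 0 + (σ.card + n - (ν.card + ρ.card))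
    | i + 1 => (ν ⊔ ρ).rowLen (i + 1) + ((ν ⊓ ρ).rowLen i - σ.rowLen i))
    (ν.card + ρ.card + 1)

section Down

variable (hμ : ∀ i, (ν ⊔ ρ).rowLen i ≤ μ.rowLen i ∧ μ.rowLen (i + 1) ≤ (ν ⊓ ρ).rowLen i)
include hμ

theorem rowLen_stripDown (i : ℕ) :
    (stripDown ν ρ μ).rowLen i =
      (ν ⊓ ρ).rowLen i - (μ.rowLen (i + 1) - (ν ⊔ ρ).rowLen (i + 1)) := by
  refine rowLen_ofRowLenFn (antitone_nat_of_succ_le fun i => ?_) ?_ i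
  · have := rowLen_inf_le_sup ν ρ (i + 1)
    have := hμ i; have := hμ (i + 1)
    omega
  · rw [rowLen_inf, rowLen_eq_zero_of_card_le le_rfl]
    simp

theorem rowLen_stripDown_bounds (i : ℕ) :
    (stripDown ν ρ μ).rowLen i ≤ (ν ⊓ ρ).rowLen i ∧
      (ν ⊔ ρ).rowLen (i + 1) ≤ (stripDown ν ρ μ).rowLen i := by
  rw [rowLen_stripDown hμ]
  have := hμ i; have := hμ (i + 1)
  omega

theorem card_stripDown :
    (stripDown ν ρ μ).card + μ.card + (ν ⊔ ρ).rowLen 0 = ν.card + ρ.card + μ.rowLen 0 := by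
  rw [← card_inf_add_card_sup ν ρ]
  refine card_add_card_add_rowLen_zero fun i => ?_
  rw [rowLen_stripDown hμ]
  have := hμ i; have := hμ (i + 1)
  omega

end Down

section Up

variable {n : ℕ} (hσ : ∀ i, σ.rowLen i ≤ (ν ⊓ ρ).rowLen i ∧ (ν ⊔ ρ).rowLen (i + 1) ≤ σ.rowLen i)
include hσ

theorem rowLen_stripUp (i : ℕ) :
    (stripUp ν ρ n σ).rowLen i = match i with
      | 0 => (ν ⊔ ρ).rowLen 0 + (σ.card + n - (ν.card + ρ.card))
      | i + 1 => (ν ⊔ ρ).rowLen (i + 1) + ((ν ⊓ ρ).rowLen i - σ.rowLen i) := by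
  refine rowLen_ofRowLenFn (antitone_nat_of_succ_le fun i => ?_) ?_ i
  · rcases i with _ | i
    · have := rowLen_inf_le_sup ν ρ 0; have := hσ 0
      dsimp only
      omega
    · have := rowLen_inf_le_sup ν ρ (i + 1); have := hσ i; have := hσ (i + 1)
      dsimp only
      omega
  · have hsup : (ν ⊔ ρ).rowLen (ν.card + ρ.card + 1) = 0 := by
      rw [rowLen_sup, rowLen_eq_zero_of_card_le (by omega), rowLen_eq_zero_of_card_le (by omega)]
      rfl
    have hinf : (ν ⊓ ρ).rowLen (ν.card + ρ.card) = 0 := by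
      rw [rowLen_inf, rowLen_eq_zero_of_card_le (by omega)]
      simp
    simp only [hsup, hinf, Nat.zero_sub, add_zero]

theorem rowLen_stripUp_bounds (i : ℕ) :
    (ν ⊔ ρ).rowLen i ≤ (stripUp ν ρ n σ).rowLen i ∧
      (stripUp ν ρ n σ).rowLen (i + 1) ≤ (ν ⊓ ρ).rowLen i := by
  rw [rowLen_stripUp hσ, rowLen_stripUp hσ (i + 1)]
  rcases i with _ | i
  · have := rowLen_inf_le_sup ν ρ 0; have := hσ 0
    dsimp only
    omega
  · have := hσ i; have := hσ (i + 1)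
    dsimp only
    omega

theorem card_stripUp (hn : ν.card + ρ.card ≤ σ.card + n) : (stripUp ν ρ n σ).card = n := by
  have key := card_add_card_add_rowLen_zero (α := σ) (β := stripUp ν ρ n σ) (γ := ν ⊓ ρ)
    (δ := ν ⊔ ρ) fun i => by
      rw [rowLen_stripUp hσ (i + 1)]
      have := hσ i
      dsimp only
      omega
  rw [card_inf_add_card_sup, rowLen_stripUp hσ 0] at key
  dsimp only at key
  omega

end Up

/-- `μ ↦ σ` with `σᵢ = (ν ⊓ ρ)ᵢ - (μᵢ₊₁ - (ν ⊔ ρ)ᵢ₊₁)`: the overhang of `μ` beyond `ν ⊔ ρ` in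
row `i + 1` is cut from `ν ⊓ ρ` in row `i`. The overhang in row `0` is lost, and is recovered
from `|μ| = n` by the telescoping identity `card_add_card_add_rowLen_zero`. -/
theorem card_isHorizontalStrip_over_eq_under (ν ρ : YoungDiagram) {n M : ℕ} (hn : n ≤ M)
    (hν : ν.card ≤ M) :
    #{μ ∈ withCardLE M | (IsHorizontalStrip μ ν ∧ IsHorizontalStrip μ ρ) ∧ μ.card = n} =
      #{σ ∈ withCardLE M | (IsHorizontalStrip ν σ ∧ IsHorizontalStrip ρ σ) ∧
        ν.card + ρ.card ≤ σ.card + n} := by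
  refine card_nbij' (stripDown ν ρ) (stripUp ν ρ n) ?_ ?_ ?_ ?_
  · intro μ hμ
    simp only [coe_filter, Set.mem_ofPred_eq, mem_withCardLE, isHorizontalStrip_over_both_iff,
      isHorizontalStrip_under_both_iff] at hμ ⊢
    obtain ⟨-, hμ, rfl⟩ := hμ
    have hle : stripDown ν ρ μ ≤ ν :=
      (le_iff_rowLen_le.mpr fun i => (rowLen_stripDown_bounds hμ i).1).trans inf_le_left
    have := card_stripDown hμ
    have := (hμ 0).1
    exact ⟨(card_mono hle).trans hν, rowLen_stripDown_bounds hμ, by omega⟩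
  · intro σ hσ
    simp only [coe_filter, Set.mem_ofPred_eq, mem_withCardLE, isHorizontalStrip_over_both_iff,
      isHorizontalStrip_under_both_iff] at hσ ⊢
    obtain ⟨-, hσ, hcard⟩ := hσ
    exact ⟨(card_stripUp hσ hcard).trans_le hn, rowLen_stripUp_bounds hσ, card_stripUp hσ hcard⟩
  · intro μ hμ
    simp only [coe_filter, Set.mem_ofPred_eq, isHorizontalStrip_over_both_iff] at hμ
    obtain ⟨-, hμ, rfl⟩ := hμ
    refine ext_rowLen fun i => ?_
    rw [rowLen_stripUp (rowLen_stripDown_bounds hμ)]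
    rcases i with _ | i
    · have := card_stripDown hμ
      have := (hμ 0).1
      dsimp only
      omega
    · dsimp only
      rw [rowLen_stripDown hμ]
      have := hμ i; have := hμ (i + 1)
      omega
  · intro σ hσ
    simp only [coe_filter, Set.mem_ofPred_eq, isHorizontalStrip_under_both_iff] at hσ
    obtain ⟨-, hσ, -⟩ := hσ
    refine ext_rowLen fun i => ?_
    rw [rowLen_stripDown (rowLen_stripUp_bounds hσ), rowLen_stripUp hσ (i + 1)]
    have := hσ i
    dsimp only
    omega

end DoubleStrip

end YoungDiagram

namespace SemistandardYoungTableau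

open YoungDiagram

variable {μ ν : YoungDiagram}

def restrict (T : SemistandardYoungTableau μ) (h : ν ≤ μ) : SemistandardYoungTableau ν where
  entry i j := if (i, j) ∈ ν then T i j else 0
  row_weak' hj hc := by
    rw [if_pos hc, if_pos (ν.up_left_mem le_rfl hj.le hc)]
    exact T.row_weak hj (h hc)
  col_strict' hi hc := by
    rw [if_pos hc, if_pos (ν.up_left_mem hi.le le_rfl hc)]
    exact T.col_strict hi (h hc)
  zeros' hc := if_neg hc

theorem restrict_apply_of_mem (T : SemistandardYoungTableau μ) (h : ν ≤ μ) {i j : ℕ}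
    (hc : (i, j) ∈ ν) : T.restrict h i j = T i j :=
  if_pos hc

def extend (T : SemistandardYoungTableau ν) (h : IsHorizontalStrip μ ν) (E : ℕ)
    (hT : ∀ i j, (i, j) ∈ ν → T i j < E) : SemistandardYoungTableau μ where
  entry i j := if (i, j) ∈ ν then T i j else if (i, j) ∈ μ then E else 0
  row_weak' {i j₁ j₂} hj hc := by
    by_cases h₂ : (i, j₂) ∈ ν
    · rw [if_pos (ν.up_left_mem le_rfl hj.le h₂), if_pos h₂]
      exact T.row_weak hj h₂
    · rw [if_neg h₂, if_pos hc]
      split_ifs with h₁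
      exacts [(hT i j₁ h₁).le, le_rfl, Nat.zero_le _]
  col_strict' {i₁ i₂ j} hi hc := by
    by_cases h₂ : (i₂, j) ∈ ν
    · rw [if_pos (ν.up_left_mem hi.le le_rfl h₂), if_pos h₂]
      exact T.col_strict hi h₂
    · have h₁ : (i₁, j) ∈ ν := (isHorizontalStrip_iff.mp h).2 i₁ j
        (μ.up_left_mem (Nat.succ_le_of_lt hi) le_rfl hc)
      rw [if_neg h₂, if_pos hc, if_pos h₁]
      exact hT i₁ j h₁
  zeros' hc := by rw [if_neg fun hν => hc (h.le hν), if_neg hc]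

theorem extend_apply (T : SemistandardYoungTableau ν) (h : IsHorizontalStrip μ ν) (E : ℕ)
    (hT : ∀ i j, (i, j) ∈ ν → T i j < E) (i j : ℕ) :
    T.extend h E hT i j = if (i, j) ∈ ν then T i j else if (i, j) ∈ μ then E else 0 :=
  rfl

def shapeBelow (T : SemistandardYoungTableau μ) (E : ℕ) : YoungDiagram where
  cells := μ.cells.filter fun c => T c.1 c.2 < E
  isLowerSet := by
    rintro ⟨i, j⟩ ⟨i', j'⟩ ⟨hi, hj⟩ h
    simp only [coe_filter, mem_cells, Set.mem_ofPred_eq] at h ⊢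
    refine ⟨μ.up_left_mem hi hj h.1, (T.row_weak_of_le hj ?_).trans_lt
      ((T.col_weak hi h.1).trans_lt h.2)⟩
    exact μ.up_left_mem hi le_rfl h.1

theorem mem_shapeBelow {T : SemistandardYoungTableau μ} {E i j : ℕ} :
    (i, j) ∈ T.shapeBelow E ↔ (i, j) ∈ μ ∧ T i j < E := by
  rw [← mem_cells]
  exact mem_filter

theorem isHorizontalStrip_shapeBelow {T : SemistandardYoungTableau μ} {E : ℕ}
    (hT : ∀ i j, (i, j) ∈ μ → T i j < E + 1) : IsHorizontalStrip μ (T.shapeBelow E) := by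
  refine isHorizontalStrip_iff.mpr ⟨fun c hc => (mem_shapeBelow.mp hc).1, fun i j hc => ?_⟩
  have := T.col_strict (Nat.lt_add_one i) hc
  have := hT _ _ hc
  exact mem_shapeBelow.mpr ⟨μ.up_left_mem (Nat.le_succ i) le_rfl hc, by omega⟩

end SemistandardYoungTableau

open YoungDiagram SemistandardYoungTableau

abbrev BoundedSSYT (E : ℕ) (μ : YoungDiagram) :=
  {T : SemistandardYoungTableau μ // ∀ i j, (i, j) ∈ μ → T i j < E}

instance (E : ℕ) (μ : YoungDiagram) : Finite (BoundedSSYT E μ) := by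
  refine Finite.of_injective (β := μ.cells → Fin E)
    (fun T c => ⟨T.1 c.1.1 c.1.2, T.2 _ _ ((mem_cells _).mp c.2)⟩) fun T T' h => ?_
  refine Subtype.ext (SemistandardYoungTableau.ext fun i j => ?_)
  by_cases hc : (i, j) ∈ μ
  · exact congrArg Fin.val (congrFun h ⟨(i, j), hc⟩)
  · rw [T.1.zeros hc, T'.1.zeros hc]

noncomputable def ssytCount (E : ℕ) (μ : YoungDiagram) : ℕ := Nat.card (BoundedSSYT E μ)

theorem ssytCount_zero (μ : YoungDiagram) : ssytCount 0 μ = if μ = ⊥ then 1 else 0 := by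
  split_ifs with hμ
  · subst hμ
    refine Nat.card_eq_one_iff_unique.mpr ⟨⟨fun T T' => ?_⟩, ⟨⟨default, fun _ _ h => ?_⟩⟩⟩
    · exact Subtype.ext (SemistandardYoungTableau.ext fun i j => by
        rw [T.1.zeros (notMem_bot _), T'.1.zeros (notMem_bot _)])
    · exact absurd h (notMem_bot _)
  · have : IsEmpty (BoundedSSYT 0 μ) := ⟨fun T => hμ (le_bot_iff.mp fun c hc =>
      absurd (T.2 c.1 c.2 hc) (Nat.not_lt_zero _))⟩
    exact Nat.card_of_isEmpty

/-- The branching rule, fibre by fibre: deleting the largest letter `E` restricts a tableau to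
its `shapeBelow E`, and filling a horizontal strip with `E` inverts this. -/
noncomputable def boundedSSYTShapeBelowEquiv {E : ℕ} {μ τ : YoungDiagram}
    (h : IsHorizontalStrip μ τ) :
    {T : BoundedSSYT (E + 1) μ // T.1.shapeBelow E = τ} ≃ BoundedSSYT E τ where
  toFun T := ⟨T.1.1.restrict h.le, fun i j hc => by
    rw [restrict_apply_of_mem _ _ hc]
    exact (mem_shapeBelow.mp (by rwa [T.2] : (i, j) ∈ T.1.1.shapeBelow E)).2⟩
  invFun T := by
    refine ⟨⟨T.1.extend h E T.2, fun i j hc => ?_⟩, ?_⟩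
    · rw [extend_apply]
      by_cases h₁ : (i, j) ∈ τ
      · rw [if_pos h₁]
        exact Nat.lt_succ_of_lt (T.2 i j h₁)
      · rw [if_neg h₁, if_pos hc]
        exact Nat.lt_succ_self E
    · ext ⟨i, j⟩
      rw [mem_cells, mem_cells, mem_shapeBelow, extend_apply]
      by_cases h₁ : (i, j) ∈ τ
      · rw [if_pos h₁]
        exact iff_of_true ⟨h.le h₁, T.2 i j h₁⟩ h₁
      · rw [if_neg h₁]
        split_ifs with h₂ <;> simp [h₁, h₂]
  left_inv T := by
    obtain ⟨⟨T, hT⟩, rfl⟩ := T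
    refine Subtype.ext (Subtype.ext (SemistandardYoungTableau.ext fun i j => ?_))
    dsimp only
    rw [extend_apply]
    by_cases h₁ : (i, j) ∈ T.shapeBelow E
    · rw [if_pos h₁, restrict_apply_of_mem _ _ h₁]
    · rw [if_neg h₁]
      rw [mem_shapeBelow] at h₁
      by_cases h₂ : (i, j) ∈ μ
      · rw [if_pos h₂]
        have := hT i j h₂
        have : ¬T i j < E := fun hlt => h₁ ⟨h₂, hlt⟩
        omega
      · rw [if_neg h₂, T.zeros h₂]
  right_inv T := by
    refine Subtype.ext (SemistandardYoungTableau.ext fun i j => ?_)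
    dsimp only
    by_cases hc : (i, j) ∈ τ
    · rw [restrict_apply_of_mem _ _ hc, extend_apply, if_pos hc]
    · rw [SemistandardYoungTableau.zeros _ hc, T.1.zeros hc]

theorem ssytCount_succ {E M : ℕ} {μ : YoungDiagram} (hμ : μ.card ≤ M) :
    ssytCount (E + 1) μ = ∑ τ ∈ withCardLE M with IsHorizontalStrip μ τ, ssytCount E τ := by
  let shape (T : BoundedSSYT (E + 1) μ) :
      {τ // τ ∈ (withCardLE M).filter (IsHorizontalStrip μ)} :=
    ⟨T.1.shapeBelow E, mem_filter.mpr ⟨mem_withCardLE.mpr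
      ((YoungDiagram.card_mono (isHorizontalStrip_shapeBelow T.2).le).trans hμ),
      isHorizontalStrip_shapeBelow T.2⟩⟩
  rw [ssytCount, Nat.card_congr (Equiv.sigmaFiberEquiv shape).symm, Nat.card_sigma,
    ← sum_coe_sort ((withCardLE M).filter (IsHorizontalStrip μ))]
  refine sum_congr rfl fun τ _ => Nat.card_congr ?_
  exact (Equiv.subtypeEquivRight fun _ => Subtype.ext_iff).trans
    (boundedSSYTShapeBelowEquiv (mem_filter.mp τ.2).2)

theorem ssytPairCount_eq_sum {D n M : ℕ} (h : n ≤ M) :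
    ssytPairCount D n = ∑ μ ∈ withCardLE M with μ.card = n, ssytCount D μ := by
  simp only [ssytPairCount, ssytCount]
  rw [← sum_coe_sort, ← Nat.card_sigma]
  exact Nat.card_congr
    { toFun := fun p => ⟨⟨p.1.1, mem_filter.mpr ⟨mem_withCardLE.mpr (p.2.1.trans_le h), p.2.1⟩⟩,
        ⟨p.1.2, p.2.2⟩⟩
      invFun := fun q => ⟨⟨q.1.1, q.2.1⟩, (mem_filter.mp q.1.2).2, q.2.2⟩
      left_inv := fun _ => rfl
      right_inv := fun _ => rfl }

theorem sum_ssytCount_succ_isHorizontalStrip (E : ℕ) (ν : YoungDiagram) {k M : ℕ}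
    (h : ν.card + k ≤ M) :
    ∑ μ ∈ withCardLE M with IsHorizontalStrip μ ν ∧ μ.card = ν.card + k, ssytCount (E + 1) μ =
      ∑ σ ∈ withCardLE M with IsHorizontalStrip ν σ,
        ∑ τ ∈ withCardLE M with IsHorizontalStrip τ σ ∧ τ.card ≤ σ.card + k, ssytCount E τ := by
  have hstrip (τ : YoungDiagram) :
      #(((withCardLE M).filter fun μ => IsHorizontalStrip μ ν ∧ μ.card = ν.card + k).filter
          fun μ => IsHorizontalStrip μ τ) =
        #(((withCardLE M).filter fun σ => IsHorizontalStrip ν σ).filter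
          fun σ => IsHorizontalStrip τ σ ∧ τ.card ≤ σ.card + k) := by
    rw [filter_filter, filter_filter]
    convert card_isHorizontalStrip_over_eq_under ν τ (n := ν.card + k) h (by omega) using 2
    · exact filter_congr fun _ _ => by tauto
    · refine filter_congr fun _ _ => ⟨fun ⟨hν, hτ, hk⟩ => ⟨⟨hν, hτ⟩, by omega⟩, ?_⟩
      exact fun ⟨⟨hν, hτ⟩, hk⟩ => ⟨hν, hτ, by omega⟩
  calc _ = ∑ μ ∈ withCardLE M with IsHorizontalStrip μ ν ∧ μ.card = ν.card + k,
        ∑ τ ∈ withCardLE M with IsHorizontalStrip μ τ, ssytCount E τ :=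
        sum_congr rfl fun μ hμ => ssytCount_succ (mem_withCardLE.mp (mem_filter.mp hμ).1)
    _ = _ := by simp only [sum_sum_filter_comm, hstrip]

theorem ssytCount_pieri (E : ℕ) :
    ∀ (ν : YoungDiagram) (K M : ℕ), ν.card + K ≤ M →
      ∑ μ ∈ withCardLE M with IsHorizontalStrip μ ν ∧ μ.card ≤ ν.card + K, ssytCount E μ =
        ssytCount E ν * (E + 1).multichoose K := by
  induction E with
  | zero =>
    intro ν K M _
    simp only [ssytCount_zero, sum_ite_eq', mem_filter, isHorizontalStrip_bot_iff]
    rw [zero_add, Nat.multichoose_one, mul_one]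
    exact if_congr (by simp) rfl rfl
  | succ E ih =>
    intro ν K M h
    rw [sum_isHorizontalStrip_card_le]
    calc _ = ∑ k ∈ range (K + 1), ∑ σ ∈ withCardLE M with IsHorizontalStrip ν σ,
          ssytCount E σ * (E + 1).multichoose k := by
          refine sum_congr rfl fun k hk => ?_
          have hk := mem_range.mp hk
          rw [sum_ssytCount_succ_isHorizontalStrip E ν (by omega)]
          refine sum_congr rfl fun σ hσ => ih σ k M ?_
          have := (mem_filter.mp hσ).2.card_le
          omega
      _ = ∑ k ∈ range (K + 1), ssytCount (E + 1) ν * (E + 1).multichoose k := by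
          simp only [← sum_mul, ← ssytCount_succ (h.trans' (Nat.le_add_right _ _))]
      _ = _ := by rw [← mul_sum, Nat.sum_range_multichoose_eq_multichoose_succ]

theorem ssytPairCount_succ_eq_sum (E n : ℕ) :
    ssytPairCount (E + 1) n = ∑ σ ∈ withCardLE n,
      ∑ τ ∈ withCardLE n with IsHorizontalStrip τ σ ∧ τ.card ≤ σ.card + (n - σ.card) / 2,
        ssytCount E τ := by
  have hstrip (τ : YoungDiagram) (hτ : τ ∈ withCardLE n) :
      #(((withCardLE n).filter fun μ => μ.card = n).filter fun μ => IsHorizontalStrip μ τ) =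
        #((withCardLE n).filter
          fun σ => IsHorizontalStrip τ σ ∧ τ.card ≤ σ.card + (n - σ.card) / 2) := by
    rw [filter_filter]
    convert card_isHorizontalStrip_over_eq_under τ τ le_rfl (mem_withCardLE.mp hτ) using 2
    · exact filter_congr fun _ _ => by tauto
    · refine filter_congr fun σ hσ => ?_
      have := mem_withCardLE.mp hτ
      have := mem_withCardLE.mp hσ
      refine ⟨fun ⟨hs, hk⟩ => ⟨⟨hs, hs⟩, by omega⟩, fun ⟨⟨hs, _⟩, hk⟩ => ⟨hs, ?_⟩⟩
      have := hs.card_le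
      omega
  calc _ = ∑ μ ∈ withCardLE n with μ.card = n,
        ∑ τ ∈ withCardLE n with IsHorizontalStrip μ τ, ssytCount E τ := by
        rw [ssytPairCount_eq_sum le_rfl]
        exact sum_congr rfl fun μ hμ => ssytCount_succ (mem_withCardLE.mp (mem_filter.mp hμ).1)
    _ = _ := by
      rw [sum_sum_filter_comm, sum_sum_filter_comm]
      exact sum_congr rfl fun τ hτ => by rw [hstrip τ hτ]

theorem ssytPairCount_succ (E n : ℕ) :
    ssytPairCount (E + 1) n =
      ∑ j ∈ range (n + 1), ssytPairCount E j * (E + 1).multichoose ((n - j) / 2) := by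
  calc _ = ∑ σ ∈ withCardLE n, ssytCount E σ * (E + 1).multichoose ((n - σ.card) / 2) := by
        rw [ssytPairCount_succ_eq_sum]
        refine sum_congr rfl fun σ hσ => ssytCount_pieri E σ _ n ?_
        have := mem_withCardLE.mp hσ
        omega
    _ = ∑ j ∈ range (n + 1), ∑ σ ∈ withCardLE n with σ.card = j,
          ssytCount E σ * (E + 1).multichoose ((n - σ.card) / 2) :=
        (sum_fiberwise_of_maps_to (fun σ hσ => mem_range.mpr
          (Nat.lt_succ_of_le (mem_withCardLE.mp hσ))) _).symm
    _ = _ := by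
      refine sum_congr rfl fun j hj => ?_
      rw [ssytPairCount_eq_sum (Nat.le_of_lt_succ (mem_range.mp hj)), sum_mul]
      exact sum_congr rfl fun σ hσ => by rw [(mem_filter.mp hσ).2]

theorem ssytPairCount_zero (n : ℕ) : ssytPairCount 0 n = if n = 0 then 1 else 0 := by
  rw [ssytPairCount_eq_sum le_rfl]
  simp only [ssytCount_zero, sum_ite_eq', mem_filter, mem_withCardLE, card_bot]
  exact if_congr (by omega) rfl rfl

theorem one_sub_X_sq_mul_mk_multichoose_half (K : ℕ) :
    (1 - X ^ 2 : ℚ⟦X⟧) * mk (fun r => ((K + 1).multichoose (r / 2) : ℚ)) =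
      mk fun r => (K.multichoose (r / 2) : ℚ) := by
  ext r
  rw [sub_mul, one_mul, map_sub, coeff_X_pow_mul', coeff_mk, coeff_mk, coeff_mk]
  split_ifs with hr
  · obtain ⟨m, rfl⟩ := Nat.exists_eq_add_of_le hr
    rw [show (2 + m) / 2 = m / 2 + 1 by omega, Nat.add_sub_cancel_left,
      Nat.multichoose_succ_succ]
    push_cast
    ring
  · rw [show r / 2 = 0 by omega]
    simp

theorem mk_multichoose_half (K : ℕ) :
    mk (fun r => ((K + 1).multichoose (r / 2) : ℚ)) = (1 - X)⁻¹ * ((1 - X ^ 2)⁻¹) ^ K := by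
  induction K with
  | zero =>
    rw [pow_zero, mul_one, PowerSeries.eq_inv_iff_mul_eq_one (by simp)]
    simp only [zero_add, Nat.multichoose_one, Nat.cast_one]
    exact mk_one_mul_one_sub_eq_one ℚ
  | succ K ih =>
    rw [pow_succ, ← mul_assoc, ← ih, PowerSeries.eq_mul_inv_iff_mul_eq (by simp), mul_comm]
    exact one_sub_X_sq_mul_mk_multichoose_half (K + 1)

theorem mk_ssytPairCount_succ (D : ℕ) :
    mk (fun n => (ssytPairCount (D + 1) n : ℚ)) =
      mk (fun n => (ssytPairCount D n : ℚ)) * mk fun r => ((D + 1).multichoose (r / 2) : ℚ) := by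
  ext n
  rw [coeff_mul, Nat.sum_antidiagonal_eq_sum_range_succ (fun i j => coeff i _ * coeff j _),
    coeff_mk, ssytPairCount_succ]
  simp only [coeff_mk, Nat.cast_sum, Nat.cast_mul]

theorem mk_ssytPairCount (D : ℕ) :
    mk (fun n => (ssytPairCount D n : ℚ)) =
      ((1 - X)⁻¹) ^ D * ((1 - X ^ 2)⁻¹) ^ ∑ i ∈ range D, i := by
  induction D with
  | zero =>
    ext n
    simp [ssytPairCount_zero, coeff_one]
  | succ D ih =>
    rw [mk_ssytPairCount_succ, ih, mk_multichoose_half, sum_range_succ, pow_succ, pow_add]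
    ring

theorem ssytPairCount_generating_series_general (D : ℕ) :
    PowerSeries.mk (fun n => (ssytPairCount D n : ℚ)) =
      ((1 - PowerSeries.X : PowerSeries ℚ)⁻¹) ^ D *
        ((1 - PowerSeries.X ^ 2 : PowerSeries ℚ)⁻¹) ^ (D * (D - 1) / 2) := by
  rw [mk_ssytPairCount, sum_range_id]

/-- The generating series of pairs (Young diagram with `n` cells, semistandard tableau of that
shape with entries in `{0,…,D-1}`) equals `(1-t)^{-D} (1-t²)^{-D(D-1)/2}` in `ℚ[[t]]`:
this is the Poincaré series of the parafermionic (and of the plactic) algebra. -/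
theorem ssytPairCount_generating_series (D : ℕ) (hD : 1 ≤ D) :
    PowerSeries.mk (fun n => (ssytPairCount D n : ℚ)) =
      ((1 - PowerSeries.X : PowerSeries ℚ)⁻¹) ^ D *
        ((1 - PowerSeries.X ^ 2 : PowerSeries ℚ)⁻¹) ^ (D * (D - 1) / 2) :=
  ssytPairCount_generating_series_general D
end

section
/- Let D ≥ 1 be an integer and let b_n ∈ ℚ be the coefficient of t^n in the formal power series (1−t)^{−D}·(1−t²)^{−D(D−1)/2} ∈ ℚ[[t]]. Then there exists a real constant C > 0 such that b_n / n^{D(D+1)/2 − 1} converges to C as n → ∞; in particular the parafermionic algebra with D degrees of freedom has polynomial growth with Gelfand–Kirillov dimension D(D+1)/2. -/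
open PowerSeries Filter

/-!
Multiplying a power series by `(1 - X ^ d)⁻¹` replaces its coefficients `b` by the solution `c` of
`c (n + d) - c n = b (n + d)`, i.e. by partial sums along each residue class mod `d`. If
`b n ~ C n ^ e`, Stolz–Cesàro along each class gives `c n ~ C / (d (e + 1)) n ^ (e + 1)`.
Starting from `(1 - X)⁻¹`, whose coefficients are all `1`, each of the remaining
`D - 1 + D (D - 1) / 2` factors raises the exponent by one, which reaches `D (D + 1) / 2 - 1`.
-/

open Topology Asymptotics Finset

theorem tendsto_div_of_tendsto_sub_div_sub {u g : ℕ → ℝ} {L : ℝ} (hg : StrictMono g)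
    (hg' : Tendsto g atTop atTop)
    (h : Tendsto (fun n => (u (n + 1) - u n) / (g (n + 1) - g n)) atTop (𝓝 L)) :
    Tendsto (fun n => u n / g n) atTop (𝓝 L) := by
  have hδ : ∀ n, 0 < g (n + 1) - g n := fun n => sub_pos.2 (hg n.lt_succ_self)
  have hstep : (fun n => (u (n + 1) - u n) - L * (g (n + 1) - g n)) =o[atTop]
      fun n => g (n + 1) - g n := by
    refine (isLittleO_iff_tendsto' (.of_forall fun n h0 => absurd h0 (hδ n).ne')).2 ?_
    refine (tendsto_sub_nhds_zero_iff.2 h).congr fun n => ?_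
    rw [sub_div (u (n + 1) - u n), mul_div_cancel_right₀ _ (hδ n).ne']
  have htele : ∀ n, ∑ i ∈ range n, ((u (i + 1) - u i) - L * (g (i + 1) - g i)) =
      (u n - u 0) - L * (g n - g 0) := fun n => by
    rw [sum_sub_distrib, ← mul_sum, sum_range_sub, sum_range_sub]
  have hsum := hstep.sum_range (fun n => (hδ n).le) <|
    (tendsto_atTop_add_const_right _ (-g 0) hg').congr fun n => by
      rw [sum_range_sub, sub_eq_add_neg]
  simp only [htele, sum_range_sub] at hsum
  have hconst : ∀ c : ℝ, (fun _ : ℕ => c) =o[atTop] g := fun c =>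
    isLittleO_const_left.2 (.inr (tendsto_abs_atTop_atTop.comp hg'))
  have hlin : (fun n => u n - L * g n) =o[atTop] g := by
    have := (hsum.trans_isBigO ((isBigO_refl g atTop).sub (hconst (g 0)).isBigO)).add
      (hconst (u 0 - L * g 0))
    exact this.congr_left fun n => by ring
  rw [← zero_add L]
  refine (hlin.tendsto_div_nhds_zero.add_const L).congr' ?_
  filter_upwards [hg'.eventually_gt_atTop 0] with n hn
  rw [sub_div, mul_div_cancel_right₀ _ hn.ne', sub_add_cancel]

theorem tendsto_of_tendsto_comp_mul_add {α : Type*} {f : ℕ → α} {l : Filter α} {d : ℕ}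
    (hd : 0 < d) (h : ∀ r < d, Tendsto (fun m => f (d * m + r)) atTop l) :
    Tendsto f atTop l := by
  rw [tendsto_def]
  intro s hs
  obtain ⟨N, hN⟩ := eventually_atTop.1 <| eventually_all.2 fun r : Fin d => h r r.isLt hs
  filter_upwards [eventually_ge_atTop (d * N)] with n hn
  have hNn : N ≤ n / d := (Nat.le_div_iff_mul_le hd).2 (by rwa [mul_comm])
  simpa only [Set.mem_preimage, Nat.div_add_mod] using hN (n / d) hNn ⟨n % d, Nat.mod_lt n hd⟩

theorem tendsto_pow_succ_sub_sub_pow_succ_div_pow (c : ℝ) (e : ℕ) :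
    Tendsto (fun x : ℝ => (x ^ (e + 1) - (x - c) ^ (e + 1)) / x ^ e) atTop (𝓝 (c * (e + 1))) := by
  -- the quotient is the slope at `0` of `h ↦ -(1 - c h) ^ (e + 1)` over the step `h = x⁻¹`
  have hderiv : HasDerivAt (fun h : ℝ => -(1 - c * h) ^ (e + 1)) (c * (e + 1)) 0 :=
    ((((hasDerivAt_id' (0 : ℝ)).const_mul c).const_sub 1).fun_pow (e + 1)).fun_neg.congr_deriv
      (by push_cast; ring)
  have := (hasDerivAt_iff_tendsto_slope_zero.1 hderiv).comp
    (tendsto_inv_atTop_nhdsGT_zero.mono_right (nhdsWithin_mono _ fun x hx => ne_of_gt hx))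
  refine this.congr' ?_
  filter_upwards [eventually_gt_atTop 0] with x hx
  have h1 : 1 - c * x⁻¹ = (x - c) / x := by field_simp
  simp only [Function.comp, zero_add, mul_zero, sub_zero, one_pow, smul_eq_mul, inv_inv, h1, div_pow]
  field_simp
  ring

section

variable {t u : ℕ → ℝ} {d e : ℕ} {C : ℝ}

theorem tendsto_comp_mul_add_div_pow_succ (hd : 0 < d) (hrel : ∀ n, t (n + d) - t n = u (n + d))
    (hu : Tendsto (fun n => u n / (n : ℝ) ^ e) atTop (𝓝 C)) (r : ℕ) :
    Tendsto (fun m => t (d * m + r) / ((d * m + r : ℕ) : ℝ) ^ (e + 1)) atTop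
      (𝓝 (C / (d * (e + 1)))) := by
  have hmono : StrictMono fun m => d * m + r := fun m m' h => by dsimp; nlinarith
  have hprog : Tendsto (fun m => d * m + r) atTop atTop := hmono.tendsto_atTop
  have hcast := (tendsto_natCast_atTop_atTop (R := ℝ)).comp (hprog.comp (tendsto_add_atTop_nat 1))
  have hden := (tendsto_pow_succ_sub_sub_pow_succ_div_pow d e).comp hcast
  have hnum := hu.comp (hprog.comp (tendsto_add_atTop_nat 1))
  refine tendsto_div_of_tendsto_sub_div_sub
    (fun m m' h => pow_lt_pow_left₀ (by exact_mod_cast hmono h) (by positivity) e.succ_ne_zero)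
    ((tendsto_pow_atTop e.succ_ne_zero).comp (tendsto_natCast_atTop_atTop.comp hprog)) ?_
  refine ((hnum.div hden (by positivity)).congr fun m => ?_)
  have hpos : (0 : ℝ) < ((d * (m + 1) + r : ℕ) : ℝ) := by positivity
  have hnext : d * (m + 1) + r = d * m + r + d := by ring
  simp only [Pi.div_apply, Function.comp_apply]
  rw [div_div_div_cancel_right₀ (pow_pos hpos e).ne', hnext, hrel, Nat.cast_add,
    add_sub_cancel_right]

theorem tendsto_div_pow_succ_of_sub_eq (hd : 0 < d) (hrel : ∀ n, t (n + d) - t n = u (n + d))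
    (hu : Tendsto (fun n => u n / (n : ℝ) ^ e) atTop (𝓝 C)) :
    Tendsto (fun n => t n / (n : ℝ) ^ (e + 1)) atTop (𝓝 (C / (d * (e + 1)))) :=
  tendsto_of_tendsto_comp_mul_add hd fun r _ => tendsto_comp_mul_add_div_pow_succ hd hrel hu r

end

namespace PowerSeries

theorem coeff_add_sub_coeff_of_one_sub_X_pow_mul {R : Type*} [CommRing R]
    {G H : R⟦X⟧} {d : ℕ} (h : (1 - X ^ d) * G = H) (n : ℕ) :
    coeff (n + d) G - coeff n G = coeff (n + d) H := by
  rw [← h, sub_mul, one_mul, map_sub, coeff_X_pow_mul]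

def HasPolynomialGrowth (f : ℚ⟦X⟧) (e : ℕ) : Prop :=
  ∃ C : ℝ, 0 < C ∧ Tendsto (fun n : ℕ => ((coeff n f : ℚ) : ℝ) / (n : ℝ) ^ e) atTop (𝓝 C)

theorem HasPolynomialGrowth.inv_one_sub_X_pow_mul {G : ℚ⟦X⟧} {d e : ℕ} (hd : 0 < d)
    (hG : HasPolynomialGrowth G e) : HasPolynomialGrowth ((1 - X ^ d)⁻¹ * G) (e + 1) := by
  obtain ⟨C, hC, hlim⟩ := hG
  have hmul : (1 - X ^ d : ℚ⟦X⟧) * ((1 - X ^ d)⁻¹ * G) = G := by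
    rw [← mul_assoc, PowerSeries.mul_inv_cancel _ (by simp [hd.ne']), one_mul]
  refine ⟨C / (d * (e + 1)), by positivity, tendsto_div_pow_succ_of_sub_eq hd (fun n => ?_) hlim⟩
  exact_mod_cast coeff_add_sub_coeff_of_one_sub_X_pow_mul hmul n

theorem hasPolynomialGrowth_inv_one_sub_X : HasPolynomialGrowth (1 - X : ℚ⟦X⟧)⁻¹ 0 := by
  have h : mk 1 = (1 - X : ℚ⟦X⟧)⁻¹ :=
    (eq_inv_iff_mul_eq_one (by simp)).2 (mk_one_mul_one_sub_eq_one ℚ)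
  refine ⟨1, one_pos, ?_⟩
  simp [← h]

theorem hasPolynomialGrowth_inv_one_sub_X_pow_mul_inv_one_sub_X_sq_pow (a b : ℕ) :
    HasPolynomialGrowth (((1 - X : ℚ⟦X⟧)⁻¹) ^ (a + 1) * ((1 - X ^ 2 : ℚ⟦X⟧)⁻¹) ^ b) (a + b) := by
  induction b with
  | zero =>
    induction a with
    | zero => simpa using hasPolynomialGrowth_inv_one_sub_X
    | succ a ih =>
      convert ih.inv_one_sub_X_pow_mul one_pos using 1
      rw [pow_one, pow_succ _ (a + 1), mul_comm _ (1 - X)⁻¹, mul_assoc]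
  | succ b ih =>
    convert ih.inv_one_sub_X_pow_mul two_pos using 1
    · rw [pow_succ _ b, mul_comm _ (1 - X ^ 2)⁻¹, mul_left_comm]
    · omega

end PowerSeries

/-- If `b_n` is the coefficient of `tⁿ` in `(1-t)^{-D} (1-t²)^{-D(D-1)/2}`, then
`b_n / n^{D(D+1)/2 - 1}` converges to a positive constant `C` as `n → ∞`: the parafermionic
algebra has polynomial growth, with Gelfand–Kirillov dimension `D(D+1)/2`. -/
theorem parafermionic_polynomial_growth (D : ℕ) (hD : 1 ≤ D) :
    ∃ C : ℝ, 0 < C ∧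
      Tendsto
        (fun n : ℕ =>
          ((PowerSeries.coeff n (parafermionicPoincareSeries D) : ℚ) : ℝ) /
            (n : ℝ) ^ (D * (D + 1) / 2 - 1))
        atTop (nhds C) := by
  obtain ⟨a, rfl⟩ : ∃ a, D = a + 1 := ⟨D - 1, by omega⟩
  have hexp : (a + 1) * (a + 1 + 1) / 2 - 1 = a + (a + 1) * (a + 1 - 1) / 2 := by
    rw [show (a + 1) * (a + 1 + 1) = (a + 1 + 1) * (a + 1 + 1 - 1) by
      rw [Nat.add_sub_cancel, mul_comm], Nat.triangle_succ]
    omega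
  rw [hexp]
  exact PowerSeries.hasPolynomialGrowth_inv_one_sub_X_pow_mul_inv_one_sub_X_sq_pow a _
end
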